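/- arXiv:2306.17710 — 6 statements merged into one kernel-verified Lean document; each statement's English description precedes it below -/
import Mathlib

section
/- Let G be a finite simple graph, let c and c_Π be positive integers, and let N* be a subneighborhood function of G with c-bounded occurrences. Let M ⊆ V(G) be a c_Π-bundle hitting set of G such that for every v ∈ M, the matching number of the subgraph of G induced on N(v) ∖ M is strictly less than c_Π. Then for every integer τ ≥ c_Π there exists a set B ⊆ V(G) with |B| · (τ − c_Π + 1) ≤ c · |M| such that for every vertex v ∉ B, the matching number of the subgraph of G induced on N*(v) ∖ B is at most τ. -/
/-- There is a matching of size `n` inside the vertex set `S` in the graph `G`: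
`n` pairwise disjoint edges of `G` with all endpoints in `S`. -/
def HasMatchingOfSize {V : Type*} (G : SimpleGraph V) (S : Set V) (n : ℕ) : Prop :=
  ∃ x y : Fin n → V,
    (∀ i, x i ∈ S) ∧ (∀ i, y i ∈ S) ∧ (∀ i, G.Adj (x i) (y i)) ∧
    Function.Injective x ∧ Function.Injective y ∧ (∀ i j, x i ≠ y j)

/-- `B` is a `t`-bundle of `G`: a set of `2t+1` distinct vertices consisting of a
vertex `v` together with a matching `x₁y₁, …, xₜyₜ` all of whose vertices are adjacent
to `v`. -/
def IsBundle {V : Type*} (G : SimpleGraph V) (t : ℕ) (B : Set V) : Prop :=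
  ∃ (v : V) (x y : Fin t → V),
    Function.Injective x ∧ Function.Injective y ∧ (∀ i j, x i ≠ y j) ∧
    (∀ i, v ≠ x i) ∧ (∀ i, v ≠ y i) ∧
    (∀ i, G.Adj (x i) (y i)) ∧ (∀ i, G.Adj v (x i)) ∧ (∀ i, G.Adj v (y i)) ∧
    B = insert v (Set.range x ∪ Set.range y)

/-- `S` is a `t`-bundle hitting set of `G`: it meets every `t`-bundle of `G`. -/
def IsBundleHitting {V : Type*} (G : SimpleGraph V) (t : ℕ) (S : Set V) : Prop :=
  ∀ B : Set V, IsBundle G t B → (S ∩ B).Nonempty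

/-!
Put into `B` every vertex `v` with at least `k = τ - cPi + 1` vertices of `M` in `N*(v)`.
Double counting the pairs `(v, u)` with `v ∈ B`, `u ∈ N*(v) ∩ M` gives `|B| · k ≤ c · |M|`.
If `v ∉ B` had a matching of size `τ + 1` in `N*(v)`, at most `k - 1` of its edges meet `M`,
so `cPi` of them avoid `M`. For `v ∈ M` this contradicts the matching condition on `M`;
for `v ∉ M` these edges together with `v` form a `cPi`-bundle missing `M`.
-/

theorem HasMatchingOfSize.mono {V : Type*} {G : SimpleGraph V} {S T : Set V} {n : ℕ}
    (h : HasMatchingOfSize G S n) (hST : S ⊆ T) : HasMatchingOfSize G T n := by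
  obtain ⟨x, y, hx, hy, hadj, hxinj, hyinj, hxy⟩ := h
  exact ⟨x, y, fun i => hST (hx i), fun i => hST (hy i), hadj, hxinj, hyinj, hxy⟩

theorem HasMatchingOfSize.diff {V : Type*} {G : SimpleGraph V} {S M : Set V} {n m : ℕ}
    (h : HasMatchingOfSize G S n) (hM : (S ∩ M).encard + m ≤ n) :
    HasMatchingOfSize G (S \ M) m := by
  classical
  obtain ⟨x, y, hx, hy, hadj, hxinj, hyinj, hxy⟩ := h
  set free : Finset (Fin n) := {i | x i ∉ M ∧ y i ∉ M}
  -- an edge meeting `M` is charged to an endpoint in `M`; disjoint edges get distinct ones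
  have hhit : ((freeᶜ).card : ℕ∞) ≤ (S ∩ M).encard := by
    rw [← Set.encard_coe_eq_coe_finsetCard]
    refine Set.encard_le_encard_of_injOn (f := fun i => if x i ∈ M then x i else y i) ?_ ?_
    · intro i hi
      simp only [Finset.coe_compl, Set.mem_compl_iff, Finset.mem_coe, free, Finset.mem_filter,
        Finset.mem_univ, true_and, not_and_or, not_not] at hi
      dsimp only
      split_ifs with hxi
      · exact ⟨hx i, hxi⟩
      · exact ⟨hy i, hi.resolve_left hxi⟩
    · intro i _ j _ hij
      simp only at hij
      split_ifs at hij
      · exact hxinj hij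
      · exact (hxy i j hij).elim
      · exact (hxy j i hij.symm).elim
      · exact hyinj hij
  have hm : m ≤ free.card := by
    have hfin : (S ∩ M).encard ≠ ⊤ := fun htop => by simp [htop] at hM
    lift (S ∩ M).encard to ℕ using hfin with r
    norm_cast at hhit hM
    have := Finset.card_add_card_compl free
    simp only [Fintype.card_fin] at this
    omega
  obtain ⟨I, hIfree, hIcard⟩ := Finset.exists_subset_card_eq hm
  let e := I.orderEmbOfFin hIcard
  have he : ∀ j, x (e j) ∉ M ∧ y (e j) ∉ M := fun j => by
    simpa [free] using hIfree (I.orderEmbOfFin_mem hIcard j)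
  exact ⟨x ∘ e, y ∘ e, fun j => ⟨hx _, (he j).1⟩, fun j => ⟨hy _, (he j).2⟩, fun _ => hadj _,
    hxinj.comp e.injective, hyinj.comp e.injective, fun _ _ => hxy _ _⟩

theorem IsBundleHitting.not_hasMatchingOfSize_neighborSet_diff {V : Type*} {G : SimpleGraph V}
    {t : ℕ} {M : Set V} (hM : IsBundleHitting G t M) {v : V} (hv : v ∉ M) :
    ¬ HasMatchingOfSize G (G.neighborSet v \ M) t := by
  rintro ⟨x, y, hx, hy, hadj, hxinj, hyinj, hxy⟩
  obtain ⟨u, huM, hu⟩ := hM _ ⟨v, x, y, hxinj, hyinj, hxy, fun i => G.ne_of_adj (hx i).1,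
    fun i => G.ne_of_adj (hy i).1, hadj, fun i => (hx i).1, fun i => (hy i).1, rfl⟩
  rcases hu with rfl | ⟨i, rfl⟩ | ⟨i, rfl⟩
  · exact hv huM
  · exact (hx i).2 huM
  · exact (hy i).2 huM

theorem Set.ncard_mul_le_of_forall_le_ncard_inter {α β : Type*} [Finite α] [Finite β]
    (N : α → Set β) (M : Set β) {B : Set α} {c k : ℕ}
    (hB : ∀ a ∈ B, k ≤ (N a ∩ M).ncard) (hocc : ∀ b, {a | b ∈ N a}.ncard ≤ c) :
    B.ncard * k ≤ c * M.ncard := by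
  classical
  cases nonempty_fintype α
  cases nonempty_fintype β
  rw [Set.ncard_eq_toFinset_card', Set.ncard_eq_toFinset_card', mul_comm c]
  refine Finset.card_mul_le_card_mul (fun a b => b ∈ N a) (fun a ha => ?_) (fun b _ => ?_)
  · refine (hB a (by simpa using ha)).trans_eq ?_
    rw [Set.ncard_eq_toFinset_card']
    congr 1
    ext b
    simp [Finset.bipartiteAbove, and_comm]
  · refine le_trans ?_ (hocc b)
    rw [Set.ncard_eq_toFinset_card']
    exact Finset.card_le_card fun a ha => by simp_all [Finset.bipartiteBelow]

theorem stmt0_general {V : Type*} [Fintype V] (G : SimpleGraph V)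
    (c cPi : ℕ)
    (Nstar : V → Set V) (hsub : ∀ v, Nstar v ⊆ G.neighborSet v)
    (hocc : ∀ u : V, {v : V | u ∈ Nstar v}.ncard ≤ c)
    (M : Set V) (hM : IsBundleHitting G cPi M)
    (hmatch : ∀ v ∈ M, ¬ HasMatchingOfSize G (G.neighborSet v \ M) cPi)
    (τ : ℕ) (hτ : cPi ≤ τ) :
    ∃ B : Set V, B.ncard * (τ - cPi + 1) ≤ c * M.ncard ∧
      ∀ v ∉ B, ¬ HasMatchingOfSize G (Nstar v \ B) (τ + 1) := by
  refine ⟨{v | τ - cPi + 1 ≤ (Nstar v ∩ M).ncard},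
    Set.ncard_mul_le_of_forall_le_ncard_inter Nstar M (fun _ h => h) hocc, ?_⟩
  intro v hv hmatching
  have hfree : HasMatchingOfSize G (Nstar v \ M) cPi := by
    refine (hmatching.mono Set.sdiff_subset).diff ?_
    rw [← (Set.toFinite _).cast_ncard_eq]
    simp only [Set.mem_ofPred_eq, not_le] at hv
    norm_cast
    omega
  have hneighbor := hfree.mono (Set.sdiff_subset_sdiff_left (hsub v))
  by_cases hvM : v ∈ M
  · exact hmatch v hvM hneighbor
  · exact hM.not_hasMatchingOfSize_neighborSet_diff hvM hneighbor

/-- Let `G` be a finite simple graph, `c, cPi` positive integers, and `Nstar` a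
subneighborhood function of `G` with `c`-bounded occurrences. Let `M` be a
`cPi`-bundle hitting set of `G` such that for every `v ∈ M` the matching number of the
induced subgraph on `N(v) \ M` is `< cPi`. Then for every `τ ≥ cPi` there is a set `B`
with `|B| · (τ − cPi + 1) ≤ c · |M|` such that for every `v ∉ B` the matching number of
the induced subgraph on `Nstar v \ B` is at most `τ`. -/
theorem stmt0 {V : Type*} [Fintype V] (G : SimpleGraph V)
    (c cPi : ℕ) (hc : 0 < c) (hcPi : 0 < cPi)
    (Nstar : V → Set V) (hsub : ∀ v, Nstar v ⊆ G.neighborSet v)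
    (hocc : ∀ u : V, {v : V | u ∈ Nstar v}.ncard ≤ c)
    (M : Set V) (hM : IsBundleHitting G cPi M)
    (hmatch : ∀ v ∈ M, ¬ HasMatchingOfSize G (G.neighborSet v \ M) cPi)
    (τ : ℕ) (hτ : cPi ≤ τ) :
    ∃ B : Set V, B.ncard * (τ - cPi + 1) ≤ c * M.ncard ∧
      ∀ v ∉ B, ¬ HasMatchingOfSize G (Nstar v \ B) (τ + 1) :=
  stmt0_general G c cPi Nstar hsub hocc M hM hmatch τ hτ
end

section
/- Let G be a finite simple graph and let M ⊆ V(G) be a triangle hitting set of G such that for every m ∈ M the set N(m) ∖ M is independent in G. Let S be an inclusion-minimal triangle hitting set of G, and let u, u' ∈ V(G) ∖ M be vertices with N(u) ∩ M = N(u') ∩ M. Then u ∈ S if and only if u' ∈ S. -/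
/-- `S` is a triangle hitting set of `G`: it contains a vertex from every set of
three pairwise adjacent vertices. -/
def IsTriangleHitting {V : Type*} (G : SimpleGraph V) (S : Set V) : Prop :=
  ∀ a b c : V, G.Adj a b → G.Adj a c → G.Adj b c → a ∈ S ∨ b ∈ S ∨ c ∈ S

/-- Let `G` be a finite simple graph and `M` a triangle hitting set of `G` such that
for every `m ∈ M` the set `N(m) \ M` is independent. Let `S` be an inclusion-minimal
triangle hitting set of `G` and let `u, u' ∉ M` have the same neighborhood in `M`.
Then `u ∈ S ↔ u' ∈ S`. -/
theorem stmt3 {V : Type*} [Fintype V] (G : SimpleGraph V)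
    (M : Set V) (hM : IsTriangleHitting G M)
    (hind : ∀ m ∈ M, ∀ u ∈ G.neighborSet m \ M, ∀ w ∈ G.neighborSet m \ M,
      ¬ G.Adj u w)
    (S : Set V) (hS : IsTriangleHitting G S)
    (hmin : ∀ S' : Set V, S' ⊂ S → ¬ IsTriangleHitting G S')
    (u u' : V) (hu : u ∉ M) (hu' : u' ∉ M)
    (hN : G.neighborSet u ∩ M = G.neighborSet u' ∩ M) :
    u ∈ S ↔ u' ∈ S := by
  -- any triangle through a vertex outside M has both other vertices in M
  have tri : ∀ v x y : V, v ∉ M → G.Adj v x → G.Adj v y → G.Adj x y →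
      x ∈ M ∧ y ∈ M := by
    intro v x y hv hvx hvy hxy
    rcases hM v x y hvx hvy hxy with h | h | h
    · exact absurd h hv
    · refine ⟨h, ?_⟩
      by_contra hyM
      exact hind x h v ⟨hvx.symm, hv⟩ y ⟨hxy, hyM⟩ hvy
    · refine ⟨?_, h⟩
      by_contra hxM
      exact absurd (hind y h v ⟨hvy.symm, hv⟩ x ⟨hxy.symm, hxM⟩ hvx) (by simp)
  have key : ∀ v v' : V, v ∉ M → v' ∉ M →
      G.neighborSet v ∩ M = G.neighborSet v' ∩ M → v ∈ S → v' ∈ S := by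
    intro v v' hv hv' hNv hvS
    have hsub : S \ {v} ⊂ S := by simpa using Set.sdiff_singleton_ssubset.mpr hvS
    have hnh := hmin _ hsub
    unfold IsTriangleHitting at hnh
    push_neg at hnh
    obtain ⟨a, b, c, hab, hac, hbc, ha, hb, hc⟩ := hnh
    simp only [Set.mem_diff, Set.mem_singleton_iff, not_and, not_not] at ha hb hc
    -- find x y with triangle v x y, x y ∉ S
    obtain ⟨x, y, hvx, hvy, hxy, hxS, hyS⟩ :
        ∃ x y : V, G.Adj v x ∧ G.Adj v y ∧ G.Adj x y ∧ x ∉ S ∧ y ∉ S := by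
      rcases hS a b c hab hac hbc with h | h | h
      · have hav := ha h; subst hav
        refine ⟨b, c, hab, hac, hbc, ?_, ?_⟩
        · intro hbS; exact hab.ne (hb hbS).symm
        · intro hcS; exact hac.ne (hc hcS).symm
      · have hbv := hb h; subst hbv
        refine ⟨a, c, hab.symm, hbc, hac, ?_, ?_⟩
        · intro haS; exact hab.ne (ha haS)
        · intro hcS; exact hbc.ne (hc hcS).symm
      · have hcv := hc h; subst hcv
        refine ⟨a, b, hac.symm, hbc.symm, hab, ?_, ?_⟩
        · intro haS; exact hac.ne (ha haS)
        · intro hbS; exact hbc.ne (hb hbS)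
    obtain ⟨hxM, hyM⟩ := tri v x y hv hvx hvy hxy
    have hx' : x ∈ G.neighborSet v' ∩ M := hNv ▸ ⟨hvx, hxM⟩
    have hy' : y ∈ G.neighborSet v' ∩ M := hNv ▸ ⟨hvy, hyM⟩
    rcases hS v' x y hx'.1 hy'.1 hxy with h | h | h
    · exact h
    · exact absurd h hxS
    · exact absurd h hyS
  exact ⟨key u u' hu hu' hN, key u' u hu' hu hN.symm⟩
end

section
/- Let k ≥ 2 and let P be the graph of a k-polygon. Then P has no triangle hitting set of size k − 1; equivalently, every triangle hitting set of P has at least k vertices. -/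
/-- A point of the plane. -/
abbrev Pt := ℝ × ℝ

/-- The closed segment with the given pair of endpoints (possibly degenerate). -/
def seg (e : Pt × Pt) : Set Pt := segment ℝ e.1 e.2

/-- A `k`-polygon: `k` pairwise disjoint horizontal closed segments of positive length
and `k` pairwise disjoint vertical closed segments of positive length, each horizontal
segment meeting exactly two vertical ones and vice-versa. -/
structure KPolygon (k : ℕ) where
  H : Fin k → Pt × Pt
  V : Fin k → Pt × Pt
  H_horiz : ∀ i, (H i).1.2 = (H i).2.2
  V_vert : ∀ j, (V j).1.1 = (V j).2.1
  H_pos : ∀ i, (H i).1 ≠ (H i).2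
  V_pos : ∀ j, (V j).1 ≠ (V j).2
  H_disj : ∀ i i', i ≠ i' → seg (H i) ∩ seg (H i') = ∅
  V_disj : ∀ j j', j ≠ j' → seg (V j) ∩ seg (V j') = ∅
  H_meets : ∀ i, {j : Fin k | (seg (H i) ∩ seg (V j)).Nonempty}.ncard = 2
  V_meets : ∀ j, {i : Fin k | (seg (H i) ∩ seg (V j)).Nonempty}.ncard = 2

/-- The corners of a `k`-polygon: the (intersection points of the) intersecting
horizontal/vertical pairs. -/
abbrev KPolygon.Corner {k : ℕ} (P : KPolygon k) : Type :=
  {ij : Fin k × Fin k // (seg (P.H ij.1) ∩ seg (P.V ij.2)).Nonempty}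

/-- The vertex set of the graph of a `k`-polygon: the horizontal segments, the
vertical segments, and the corners. -/
abbrev KPolygon.Vtx {k : ℕ} (P : KPolygon k) : Type :=
  Fin k ⊕ Fin k ⊕ P.Corner

/-- The graph of a `k`-polygon: two segments are adjacent iff they intersect, and a
corner is adjacent exactly to the horizontal and the vertical segment whose
intersection it is. -/
def KPolygon.graph {k : ℕ} (P : KPolygon k) : SimpleGraph P.Vtx :=
  SimpleGraph.fromRel (fun a b =>
    match a, b with
    | Sum.inl i, Sum.inr (Sum.inl j) => (seg (P.H i) ∩ seg (P.V j)).Nonempty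
    | Sum.inr (Sum.inr c), Sum.inl i => c.1.1 = i
    | Sum.inr (Sum.inr c), Sum.inr (Sum.inl j) => c.1.2 = j
    | _, _ => False)

/-- A triangle of a graph: a set of three pairwise adjacent vertices. -/
def IsTriangle {W : Type*} (G : SimpleGraph W) (T : Finset W) : Prop :=
  T.card = 3 ∧ ∀ a ∈ T, ∀ b ∈ T, a ≠ b → G.Adj a b

/-!
For every corner `c = H_i ∩ V_j`, the three vertices `H_i`, `V_j`, `c` form a triangle, so a
triangle hitting set must meet each of these `2k` corner triangles. A segment lies in exactly
the two corner triangles of its two corners, and a corner only in its own, so every vertex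
hits at most two of them and a hitting set has at least `2k / 2 = k` vertices.
-/

open Finset

theorem Nat.card_le_mul_ncard_of_forall_exists_mem {α β : Type*} [Finite α] [Finite β]
    (T : α → Finset β) (S : Set β) (m : ℕ) (hS : ∀ a, ∃ x ∈ S, x ∈ T a)
    (hm : ∀ x, {a | x ∈ T a}.ncard ≤ m) :
    Nat.card α ≤ m * S.ncard := by
  classical
  have := Fintype.ofFinite α
  choose g hgS hgT using hS
  have hfiber : ∀ x ∈ univ.image g, #{a | g a = x} ≤ m := fun x _ => by
    rw [← Set.ncard_coe_finset]
    refine le_trans (Set.ncard_le_ncard ?_) (hm x)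
    intro a ha
    simp only [coe_filter, mem_univ, true_and, Set.mem_ofPred_eq] at ha
    exact ha ▸ hgT a
  have himage : #(univ.image g) ≤ S.ncard := by
    rw [← Set.ncard_coe_finset]
    exact Set.ncard_le_ncard (by simpa [Set.range_subset_iff] using hgS)
  calc Nat.card α = #(univ : Finset α) := by rw [Finset.card_univ, Nat.card_eq_fintype_card]
    _ ≤ m * #(univ.image g) := card_le_mul_card_image _ m hfiber
    _ ≤ m * S.ncard := Nat.mul_le_mul_left m himage

theorem Nat.card_subtype_prod {α β : Type*} [Fintype α] (p : α → β → Prop)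
    [∀ a, Finite {b // p a b}] :
    Nat.card {x : α × β // p x.1 x.2} = ∑ a, Nat.card {b // p a b} := by
  rw [Nat.card_congr (Equiv.subtypeProdEquivSigmaSubtype p), Nat.card_sigma]

namespace KPolygon

variable {k : ℕ} (P : KPolygon k)

theorem card_corner : Nat.card P.Corner = 2 * k := by
  have hrow : ∀ i, Nat.card {j // (seg (P.H i) ∩ seg (P.V j)).Nonempty} = 2 := fun i => by
    rw [← Set.coe_ofPred, Nat.card_coe_set_eq, P.H_meets i]
  rw [Nat.card_subtype_prod (fun i j => (seg (P.H i) ∩ seg (P.V j)).Nonempty)]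
  simp [hrow, mul_comm]

def cornerTriangle (c : P.Corner) : Finset P.Vtx :=
  {.inl c.1.1, .inr (.inl c.1.2), .inr (.inr c)}

theorem isTriangle_cornerTriangle (c : P.Corner) : IsTriangle P.graph (P.cornerTriangle c) := by
  refine ⟨by simp [cornerTriangle], ?_⟩
  simp only [cornerTriangle, mem_insert, mem_singleton]
  rintro a (rfl | rfl | rfl) b (rfl | rfl | rfl) hab <;>
    simp_all [KPolygon.graph, SimpleGraph.fromRel_adj, c.2]

@[simp]
theorem inl_mem_cornerTriangle {i : Fin k} {c : P.Corner} :
    .inl i ∈ P.cornerTriangle c ↔ c.1.1 = i := by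
  simp [cornerTriangle, eq_comm]

@[simp]
theorem inr_inl_mem_cornerTriangle {j : Fin k} {c : P.Corner} :
    .inr (.inl j) ∈ P.cornerTriangle c ↔ c.1.2 = j := by
  simp [cornerTriangle, eq_comm]

@[simp]
theorem inr_inr_mem_cornerTriangle {c₀ c : P.Corner} :
    .inr (.inr c₀) ∈ P.cornerTriangle c ↔ c = c₀ := by
  simp [cornerTriangle, eq_comm]

theorem ncard_mem_cornerTriangle_le_two (x : P.Vtx) :
    {c | x ∈ P.cornerTriangle c}.ncard ≤ 2 := by
  rcases x with i | j | c₀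
  · calc {c | Sum.inl i ∈ P.cornerTriangle c}.ncard
        ≤ {j | (seg (P.H i) ∩ seg (P.V j)).Nonempty}.ncard := by
          refine Set.ncard_le_ncard_of_injOn (fun c => c.1.2) (fun c hc => ?_) ?_
          · simp only [Set.mem_ofPred_eq, inl_mem_cornerTriangle] at hc
            exact hc ▸ c.2
          · intro c hc c' hc' hcc'
            simp_all [Subtype.ext_iff, Prod.ext_iff]
      _ = 2 := P.H_meets i
  · calc {c | Sum.inr (Sum.inl j) ∈ P.cornerTriangle c}.ncard
        ≤ {i | (seg (P.H i) ∩ seg (P.V j)).Nonempty}.ncard := by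
          refine Set.ncard_le_ncard_of_injOn (fun c => c.1.1) (fun c hc => ?_) ?_
          · simp only [Set.mem_ofPred_eq, inr_inl_mem_cornerTriangle] at hc
            exact hc ▸ c.2
          · intro c hc c' hc' hcc'
            simp_all [Subtype.ext_iff, Prod.ext_iff]
      _ = 2 := P.V_meets j
  · simp

end KPolygon

theorem stmt5_general {k : ℕ} (P : KPolygon k)
    (S : Set P.Vtx)
    (hS : ∀ T : Finset P.Vtx, IsTriangle P.graph T → ∃ x ∈ S, x ∈ T) :
    k ≤ S.ncard := by
  have h := Nat.card_le_mul_ncard_of_forall_exists_mem P.cornerTriangle S 2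
    (fun c => hS _ (P.isTriangle_cornerTriangle c)) P.ncard_mem_cornerTriangle_le_two
  rw [P.card_corner] at h
  omega

/-- Let `k ≥ 2` and let `P` be (the graph of) a `k`-polygon. Then every triangle
hitting set of `P` has at least `k` vertices; equivalently, `P` has no triangle
hitting set of size `k − 1`. -/
theorem stmt5 {k : ℕ} (hk : 2 ≤ k) (P : KPolygon k) (hconn : P.graph.Connected)
    (S : Set P.Vtx)
    (hS : ∀ T : Finset P.Vtx, IsTriangle P.graph T → ∃ x ∈ S, x ∈ T) :
    k ≤ S.ncard :=
  stmt5_general P S hS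
end

section
/- Let n ≥ 1 and let s₁, …, sₙ be a family of n segments in ℝ² in contact position such that any two of the segments intersect (i.e., the family is a contact-segment representation of the complete graph Kₙ). Then there exists a point of ℝ² that belongs to at least n − 1 of the segments. -/
/-- A family of segments is in contact position if every point common to two distinct
members is an endpoint of at least one of the two. -/
def InContactPosition {ι : Type*} (s : ι → Pt × Pt) : Prop :=
  ∀ i j, i ≠ j → ∀ p ∈ seg (s i), p ∈ seg (s j) →
    p = (s i).1 ∨ p = (s i).2 ∨ p = (s j).1 ∨ p = (s j).2

namespace Stmt7Aux

lemma mem_seg_iff {e : Pt × Pt} {z : Pt} :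
    z ∈ seg e ↔ ∃ t : ℝ, 0 ≤ t ∧ t ≤ 1 ∧ z = e.1 + t • (e.2 - e.1) := by
  rw [seg, segment_eq_image']
  constructor
  · rintro ⟨t, ht, rfl⟩; exact ⟨t, ht.1, ht.2, rfl⟩
  · rintro ⟨t, h0, h1, rfl⟩; exact ⟨t, ⟨h0, h1⟩, rfl⟩

lemma seg_inter_subsingleton {u v : Pt × Pt}
    (hc : ∀ p ∈ seg u, p ∈ seg v → p = u.1 ∨ p = u.2 ∨ p = v.1 ∨ p = v.2)
    {z w : Pt} (hz : z ∈ seg u ∩ seg v) (hw : w ∈ seg u ∩ seg v) : z = w := by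
  by_contra hne
  have hsub : segment ℝ z w ⊆ seg u ∩ seg v := by
    intro x hx
    exact ⟨(convex_segment u.1 u.2).segment_subset hz.1 hw.1 hx,
      (convex_segment v.1 v.2).segment_subset hz.2 hw.2 hx⟩
  have hinf : (segment ℝ z w).Infinite := by
    rw [segment_eq_image']
    apply Set.Infinite.image
    · intro t1 _ t2 _ h
      have hwz : w - z ≠ 0 := sub_ne_zero.mpr (Ne.symm hne)
      have := smul_left_injective ℝ hwz (by
        have h' : z + t1 • (w - z) = z + t2 • (w - z) := h
        exact add_left_cancel h')
      exact this
    · exact Set.Icc_infinite zero_lt_one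
  have hfin : (segment ℝ z w).Finite := by
    apply (Set.toFinite {u.1, u.2, v.1, v.2}).subset
    intro x hx
    rcases hc x (hsub hx).1 (hsub hx).2 with h | h | h | h <;> simp [h]
  exact hinf hfin

/-- Pure propositional core: the middle-assignment sign system is unsatisfiable. -/
lemma prop_core (Pa Pb Pc Pd Pe Pf : Prop)
    (U1a : ¬(¬(Pb ↔ Pc) ∧ (Pa ↔ Pc)))
    (U2a : ¬(¬(Pd ↔ Pe) ∧ (Pa ↔ Pe)))
    (U3a : ¬(¬(Pd ↔ Pf) ∧ (Pb ↔ Pf)))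
    (U4a : ¬(¬(Pe ↔ Pf) ∧ (Pc ↔ Pf)))
    (P12 : ¬(¬(Pb ↔ Pc) ∧ ¬(Pd ↔ Pe))) (P13 : ¬((Pa ↔ Pc) ∧ ¬(Pd ↔ Pf)))
    (P14 : ¬(¬(Pa ↔ Pb) ∧ ¬(Pe ↔ Pf))) (P23 : ¬((Pa ↔ Pe) ∧ (Pb ↔ Pf)))
    (P24 : ¬(¬(Pa ↔ Pd) ∧ (Pc ↔ Pf))) (P34 : ¬(¬(Pb ↔ Pd) ∧ ¬(Pc ↔ Pe))) : False := by
  by_cases ha : Pa <;> by_cases hb : Pb <;> by_cases hc : Pc <;> by_cases hd : Pd <;>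
    by_cases he : Pe <;> by_cases hf : Pf <;> simp_all

lemma sgn_mul_neg {x y : ℝ} (hx : x ≠ 0) (hy : y ≠ 0) : x*y < 0 ↔ ¬(0 < x ↔ 0 < y) := by
  rcases hx.lt_or_gt with hx' | hx' <;> rcases hy.lt_or_gt with hy' | hy'
  · constructor
    · intro h _; nlinarith
    · intro hn; exact absurd (by constructor <;> intro <;> linarith) hn
  · constructor
    · intro _ hiff; have := hiff.mpr hy'; linarith
    · intro _; exact mul_neg_of_neg_of_pos hx' hy'
  · constructor
    · intro _ hiff; have := hiff.mp hx'; linarith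
    · intro _; exact mul_neg_of_pos_of_neg hx' hy'
  · constructor
    · intro h _; nlinarith
    · intro hn; exact absurd (by constructor <;> intro <;> linarith) hn

lemma sgn_mul_pos {x y : ℝ} (hx : x ≠ 0) (hy : y ≠ 0) : 0 < x*y ↔ (0 < x ↔ 0 < y) := by
  have h1 := sgn_mul_neg hx hy
  have h2 : x*y ≠ 0 := mul_ne_zero hx hy
  constructor
  · intro h
    by_contra hcon
    exact absurd (h1.mpr hcon) (by linarith)
  · intro h
    rcases h2.lt_or_gt with hlt | hlt
    · exact absurd (h1.mp hlt) (by tauto)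
    · exact hlt

lemma sqf1 {K m : ℝ} (hK : K ≠ 0) (h : K^2*m < 0) : m < 0 := by
  have hK2 : 0 < K^2 := lt_of_le_of_ne (sq_nonneg K) (Ne.symm (pow_ne_zero 2 hK))
  nlinarith

lemma sqf2 {K m : ℝ} (hK : K ≠ 0) (h : 0 < -(K^2*m)) : m < 0 := by
  have hK2 : 0 < K^2 := lt_of_le_of_ne (sq_nonneg K) (Ne.symm (pow_ne_zero 2 hK))
  nlinarith

lemma mid_unique {x y z : ℝ} (h1 : (y-x)*(z-x) < 0) (h2 : (x-y)*(z-y) < 0) : False := by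
  nlinarith [h1, h2, sq_nonneg (y-x)]

lemma between_open {x y m : ℝ} (h : (x-m)*(y-m) < 0) (hx0 : 0 ≤ x) (hx1 : x ≤ 1)
    (hy0 : 0 ≤ y) (hy1 : y ≤ 1) : 0 < m ∧ m < 1 := by
  rcases mul_neg_iff.mp h with ⟨h1, h2⟩ | ⟨h1, h2⟩ <;> constructor <;> nlinarith

lemma ring2 (d1x d1y a1x a1y d2x d2y a2x a2y d3x d3y a3x a3y px py : ℝ) :
    ((d1x*d2y - d1y*d2x)*(d3x*(0 - a3y) - d3y*(0 - a3x)) + (d2x*d3y - d2y*d3x)*(d1x*(0 - a1y) - d1y*(0 - a1x)) + (d3x*d1y - d3y*d1x)*(d2x*(0 - a2y) - d2y*(0 - a2x))) = (d1x*d2y - d1y*d2x)*(d3x*(py - a3y) - d3y*(px - a3x)) + (d2x*d3y - d2y*d3x)*(d1x*(py - a1y) - d1y*(px - a1x)) + (d3x*d1y - d3y*d1x)*(d2x*(py - a2y) - d2y*(px - a2x)) := by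
  ring

lemma ring1 (a0x a0y d0x d0y a1x a1y d1x d1y a2x a2y d2x d2y a3x a3y d3x d3y px py : ℝ) :
    ((d1x*d2y - d1y*d2x)*(d3x*(0 - a3y) - d3y*(0 - a3x)) + (d2x*d3y - d2y*d3x)*(d1x*(0 - a1y) - d1y*(0 - a1x)) + (d3x*d1y - d3y*d1x)*(d2x*(0 - a2y) - d2y*(0 - a2x)))*(d0x*(py - a0y) - d0y*(px - a0x)) + (-((d0x*d2y - d0y*d2x)*(d3x*(0 - a3y) - d3y*(0 - a3x)) + (d2x*d3y - d2y*d3x)*(d0x*(0 - a0y) - d0y*(0 - a0x)) + (d3x*d0y - d3y*d0x)*(d2x*(0 - a2y) - d2y*(0 - a2x))))*(d1x*(py - a1y) - d1y*(px - a1x)) + ((d0x*d1y - d0y*d1x)*(d3x*(0 - a3y) - d3y*(0 - a3x)) + (d1x*d3y - d1y*d3x)*(d0x*(0 - a0y) - d0y*(0 - a0x)) + (d3x*d0y - d3y*d0x)*(d1x*(0 - a1y) - d1y*(0 - a1x)))*(d2x*(py - a2y) - d2y*(px - a2x)) + (-((d0x*d1y - d0y*d1x)*(d2x*(0 - a2y)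 - d2y*(0 - a2x)) + (d1x*d2y - d1y*d2x)*(d0x*(0 - a0y) - d0y*(0 - a0x)) + (d2x*d0y - d2y*d0x)*(d1x*(0 - a1y) - d1y*(0 - a1x))))*(d3x*(py - a3y) - d3y*(px - a3x)) = 0 := by
  ring

set_option maxHeartbeats 1600000 in
lemma quad_core
    (a0x a0y d0x d0y a1x a1y d1x d1y a2x a2y d2x d2y a3x a3y d3x d3y : ℝ)
    (t01 t02 t03 t10 t12 t13 t20 t21 t23 t30 t31 t32 : ℝ)
    (cr01 : (d0x*d1y - d0y*d1x) ≠ 0)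
    (cr02 : (d0x*d2y - d0y*d2x) ≠ 0)
    (cr03 : (d0x*d3y - d0y*d3x) ≠ 0)
    (cr12 : (d1x*d2y - d1y*d2x) ≠ 0)
    (cr13 : (d1x*d3y - d1y*d3x) ≠ 0)
    (cr23 : (d2x*d3y - d2y*d3x) ≠ 0)
    (E01x : a0x + t01*d0x = a1x + t10*d1x)
    (E01y : a0y + t01*d0y = a1y + t10*d1y)
    (E02x : a0x + t02*d0x = a2x + t20*d2x)
    (E02y : a0y + t02*d0y = a2y + t20*d2y)
    (E03x : a0x + t03*d0x = a3x + t30*d3x)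
    (E03y : a0y + t03*d0y = a3y + t30*d3y)
    (E12x : a1x + t12*d1x = a2x + t21*d2x)
    (E12y : a1y + t12*d1y = a2y + t21*d2y)
    (E13x : a1x + t13*d1x = a3x + t31*d3x)
    (E13y : a1y + t13*d1y = a3y + t31*d3y)
    (E23x : a2x + t23*d2x = a3x + t32*d3x)
    (E23y : a2y + t23*d2y = a3y + t32*d3y)
    (B01a : 0 ≤ t01) (B01b : t01 ≤ 1)
    (B02a : 0 ≤ t02) (B02b : t02 ≤ 1)
    (B03a : 0 ≤ t03) (B03b : t03 ≤ 1)
    (B10a : 0 ≤ t10) (B10b : t10 ≤ 1)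
    (B12a : 0 ≤ t12) (B12b : t12 ≤ 1)
    (B13a : 0 ≤ t13) (B13b : t13 ≤ 1)
    (B20a : 0 ≤ t20) (B20b : t20 ≤ 1)
    (B21a : 0 ≤ t21) (B21b : t21 ≤ 1)
    (B23a : 0 ≤ t23) (B23b : t23 ≤ 1)
    (B30a : 0 ≤ t30) (B30b : t30 ≤ 1)
    (B31a : 0 ≤ t31) (B31b : t31 ≤ 1)
    (B32a : 0 ≤ t32) (B32b : t32 ≤ 1)
    (H01 : t01 = 0 ∨ t01 = 1 ∨ t10 = 0 ∨ t10 = 1)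
    (H02 : t02 = 0 ∨ t02 = 1 ∨ t20 = 0 ∨ t20 = 1)
    (H03 : t03 = 0 ∨ t03 = 1 ∨ t30 = 0 ∨ t30 = 1)
    (H12 : t12 = 0 ∨ t12 = 1 ∨ t21 = 0 ∨ t21 = 1)
    (H13 : t13 = 0 ∨ t13 = 1 ∨ t31 = 0 ∨ t31 = 1)
    (H23 : t23 = 0 ∨ t23 = 1 ∨ t32 = 0 ∨ t32 = 1)
    (N0_12 : t01 ≠ t02)
    (N0_13 : t01 ≠ t03)
    (N0_23 : t02 ≠ t03)
    (N1_02 : t10 ≠ t12)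
    (N1_03 : t10 ≠ t13)
    (N1_23 : t12 ≠ t13)
    (N2_01 : t20 ≠ t21)
    (N2_03 : t20 ≠ t23)
    (N2_13 : t21 ≠ t23)
    (N3_01 : t30 ≠ t31)
    (N3_02 : t30 ≠ t32)
    (N3_12 : t31 ≠ t32)
    : False := by
  have cr10 : (d1x*d0y - d1y*d0x) ≠ 0 := fun h => cr01 (by linarith)
  have cr20 : (d2x*d0y - d2y*d0x) ≠ 0 := fun h => cr02 (by linarith)
  have cr21 : (d2x*d1y - d2y*d1x) ≠ 0 := fun h => cr12 (by linarith)
  have cr30 : (d3x*d0y - d3y*d0x) ≠ 0 := fun h => cr03 (by linarith)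
  have cr31 : (d3x*d1y - d3y*d1x) ≠ 0 := fun h => cr13 (by linarith)
  have cr32 : (d3x*d2y - d3y*d2x) ≠ 0 := fun h => cr23 (by linarith)
  obtain ⟨l0, hl0⟩ : ∃ l0 : ℝ, l0 = ((d1x*d2y - d1y*d2x)*(d3x*(0 - a3y) - d3y*(0 - a3x)) + (d2x*d3y - d2y*d3x)*(d1x*(0 - a1y) - d1y*(0 - a1x)) + (d3x*d1y - d3y*d1x)*(d2x*(0 - a2y) - d2y*(0 - a2x))) := ⟨_, rfl⟩
  obtain ⟨l1, hl1⟩ : ∃ l1 : ℝ, l1 = -((d0x*d2y - d0y*d2x)*(d3x*(0 - a3y) - d3y*(0 - a3x)) + (d2x*d3y - d2y*d3x)*(d0x*(0 - a0y) - d0y*(0 - a0x)) + (d3x*d0y - d3y*d0x)*(d2x*(0 - a2y) - d2y*(0 - a2x))) := ⟨_, rfl⟩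
  obtain ⟨l2, hl2⟩ : ∃ l2 : ℝ, l2 = ((d0x*d1y - d0y*d1x)*(d3x*(0 - a3y) - d3y*(0 - a3x)) + (d1x*d3y - d1y*d3x)*(d0x*(0 - a0y) - d0y*(0 - a0x)) + (d3x*d0y - d3y*d0x)*(d1x*(0 - a1y) - d1y*(0 - a1x))) := ⟨_, rfl⟩
  obtain ⟨l3, hl3⟩ : ∃ l3 : ℝ, l3 = -((d0x*d1y - d0y*d1x)*(d2x*(0 - a2y) - d2y*(0 - a2x)) + (d1x*d2y - d1y*d2x)*(d0x*(0 - a0y) - d0y*(0 - a0x)) + (d2x*d0y - d2y*d0x)*(d1x*(0 - a1y) - d1y*(0 - a1x))) := ⟨_, rfl⟩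
  have V01 : (d1x*((a0y + t01*d0y) - a1y) - d1y*((a0x + t01*d0x) - a1x)) = 0 := by rw [E01x, E01y]; ring
  have V02 : (d2x*((a0y + t02*d0y) - a2y) - d2y*((a0x + t02*d0x) - a2x)) = 0 := by rw [E02x, E02y]; ring
  have V03 : (d3x*((a0y + t03*d0y) - a3y) - d3y*((a0x + t03*d0x) - a3x)) = 0 := by rw [E03x, E03y]; ring
  have V10 : (d0x*((a1y + t10*d1y) - a0y) - d0y*((a1x + t10*d1x) - a0x)) = 0 := by rw [← E01x, ← E01y]; ring
  have V12 : (d2x*((a1y + t12*d1y) - a2y) - d2y*((a1x + t12*d1x) - a2x)) = 0 := by rw [E12x, E12y]; ring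
  have V13 : (d3x*((a1y + t13*d1y) - a3y) - d3y*((a1x + t13*d1x) - a3x)) = 0 := by rw [E13x, E13y]; ring
  have V20 : (d0x*((a2y + t20*d2y) - a0y) - d0y*((a2x + t20*d2x) - a0x)) = 0 := by rw [← E02x, ← E02y]; ring
  have V21 : (d1x*((a2y + t21*d2y) - a1y) - d1y*((a2x + t21*d2x) - a1x)) = 0 := by rw [← E12x, ← E12y]; ring
  have V23 : (d3x*((a2y + t23*d2y) - a3y) - d3y*((a2x + t23*d2x) - a3x)) = 0 := by rw [E23x, E23y]; ring
  have V30 : (d0x*((a3y + t30*d3y) - a0y) - d0y*((a3x + t30*d3x) - a0x)) = 0 := by rw [← E03x, ← E03y]; ring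
  have V31 : (d1x*((a3y + t31*d3y) - a1y) - d1y*((a3x + t31*d3x) - a1x)) = 0 := by rw [← E13x, ← E13y]; ring
  have V32 : (d2x*((a3y + t32*d3y) - a2y) - d2y*((a3x + t32*d3x) - a2x)) = 0 := by rw [← E23x, ← E23y]; ring
  have VS01 : (d0x*((a0y + t01*d0y) - a0y) - d0y*((a0x + t01*d0x) - a0x)) = 0 := by ring
  have VS02 : (d0x*((a0y + t02*d0y) - a0y) - d0y*((a0x + t02*d0x) - a0x)) = 0 := by ring
  have VS03 : (d0x*((a0y + t03*d0y) - a0y) - d0y*((a0x + t03*d0x) - a0x)) = 0 := by ring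
  have VS10 : (d1x*((a1y + t10*d1y) - a1y) - d1y*((a1x + t10*d1x) - a1x)) = 0 := by ring
  have VS12 : (d1x*((a1y + t12*d1y) - a1y) - d1y*((a1x + t12*d1x) - a1x)) = 0 := by ring
  have VS13 : (d1x*((a1y + t13*d1y) - a1y) - d1y*((a1x + t13*d1x) - a1x)) = 0 := by ring
  have VS20 : (d2x*((a2y + t20*d2y) - a2y) - d2y*((a2x + t20*d2x) - a2x)) = 0 := by ring
  have VS21 : (d2x*((a2y + t21*d2y) - a2y) - d2y*((a2x + t21*d2x) - a2x)) = 0 := by ring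
  have VS23 : (d2x*((a2y + t23*d2y) - a2y) - d2y*((a2x + t23*d2x) - a2x)) = 0 := by ring
  have VS30 : (d3x*((a3y + t30*d3y) - a3y) - d3y*((a3x + t30*d3x) - a3x)) = 0 := by ring
  have VS31 : (d3x*((a3y + t31*d3y) - a3y) - d3y*((a3x + t31*d3x) - a3x)) = 0 := by ring
  have VS32 : (d3x*((a3y + t32*d3y) - a3y) - d3y*((a3x + t32*d3x) - a3x)) = 0 := by ring
  have S012 : (d2x*((a0y + t01*d0y) - a2y) - d2y*((a0x + t01*d0x) - a2x)) = (t01 - t02)*(d2x*d0y - d2y*d0x) := by linear_combination V02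
  have S013 : (d3x*((a0y + t01*d0y) - a3y) - d3y*((a0x + t01*d0x) - a3x)) = (t01 - t03)*(d3x*d0y - d3y*d0x) := by linear_combination V03
  have S021 : (d1x*((a0y + t02*d0y) - a1y) - d1y*((a0x + t02*d0x) - a1x)) = (t02 - t01)*(d1x*d0y - d1y*d0x) := by linear_combination V01
  have S023 : (d3x*((a0y + t02*d0y) - a3y) - d3y*((a0x + t02*d0x) - a3x)) = (t02 - t03)*(d3x*d0y - d3y*d0x) := by linear_combination V03
  have S031 : (d1x*((a0y + t03*d0y) - a1y) - d1y*((a0x + t03*d0x) - a1x)) = (t03 - t01)*(d1x*d0y - d1y*d0x) := by linear_combination V01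
  have S032 : (d2x*((a0y + t03*d0y) - a2y) - d2y*((a0x + t03*d0x) - a2x)) = (t03 - t02)*(d2x*d0y - d2y*d0x) := by linear_combination V02
  have S102 : (d2x*((a0y + t01*d0y) - a2y) - d2y*((a0x + t01*d0x) - a2x)) = (t10 - t12)*(d2x*d1y - d2y*d1x) := by rw [E01x, E01y]; linear_combination V12
  have S103 : (d3x*((a0y + t01*d0y) - a3y) - d3y*((a0x + t01*d0x) - a3x)) = (t10 - t13)*(d3x*d1y - d3y*d1x) := by rw [E01x, E01y]; linear_combination V13
  have S120 : (d0x*((a1y + t12*d1y) - a0y) - d0y*((a1x + t12*d1x) - a0x)) = (t12 - t10)*(d0x*d1y - d0y*d1x) := by linear_combination V10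
  have S123 : (d3x*((a1y + t12*d1y) - a3y) - d3y*((a1x + t12*d1x) - a3x)) = (t12 - t13)*(d3x*d1y - d3y*d1x) := by linear_combination V13
  have S130 : (d0x*((a1y + t13*d1y) - a0y) - d0y*((a1x + t13*d1x) - a0x)) = (t13 - t10)*(d0x*d1y - d0y*d1x) := by linear_combination V10
  have S132 : (d2x*((a1y + t13*d1y) - a2y) - d2y*((a1x + t13*d1x) - a2x)) = (t13 - t12)*(d2x*d1y - d2y*d1x) := by linear_combination V12
  have S201 : (d1x*((a0y + t02*d0y) - a1y) - d1y*((a0x + t02*d0x) - a1x)) = (t20 - t21)*(d1x*d2y - d1y*d2x) := by rw [E02x, E02y]; linear_combination V21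
  have S203 : (d3x*((a0y + t02*d0y) - a3y) - d3y*((a0x + t02*d0x) - a3x)) = (t20 - t23)*(d3x*d2y - d3y*d2x) := by rw [E02x, E02y]; linear_combination V23
  have S210 : (d0x*((a1y + t12*d1y) - a0y) - d0y*((a1x + t12*d1x) - a0x)) = (t21 - t20)*(d0x*d2y - d0y*d2x) := by rw [E12x, E12y]; linear_combination V20
  have S213 : (d3x*((a1y + t12*d1y) - a3y) - d3y*((a1x + t12*d1x) - a3x)) = (t21 - t23)*(d3x*d2y - d3y*d2x) := by rw [E12x, E12y]; linear_combination V23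
  have S230 : (d0x*((a2y + t23*d2y) - a0y) - d0y*((a2x + t23*d2x) - a0x)) = (t23 - t20)*(d0x*d2y - d0y*d2x) := by linear_combination V20
  have S231 : (d1x*((a2y + t23*d2y) - a1y) - d1y*((a2x + t23*d2x) - a1x)) = (t23 - t21)*(d1x*d2y - d1y*d2x) := by linear_combination V21
  have S301 : (d1x*((a0y + t03*d0y) - a1y) - d1y*((a0x + t03*d0x) - a1x)) = (t30 - t31)*(d1x*d3y - d1y*d3x) := by rw [E03x, E03y]; linear_combination V31
  have S302 : (d2x*((a0y + t03*d0y) - a2y) - d2y*((a0x + t03*d0x) - a2x)) = (t30 - t32)*(d2x*d3y - d2y*d3x) := by rw [E03x, E03y]; linear_combination V32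
  have S310 : (d0x*((a1y + t13*d1y) - a0y) - d0y*((a1x + t13*d1x) - a0x)) = (t31 - t30)*(d0x*d3y - d0y*d3x) := by rw [E13x, E13y]; linear_combination V30
  have S312 : (d2x*((a1y + t13*d1y) - a2y) - d2y*((a1x + t13*d1x) - a2x)) = (t31 - t32)*(d2x*d3y - d2y*d3x) := by rw [E13x, E13y]; linear_combination V32
  have S320 : (d0x*((a2y + t23*d2y) - a0y) - d0y*((a2x + t23*d2x) - a0x)) = (t32 - t30)*(d0x*d3y - d0y*d3x) := by rw [E23x, E23y]; linear_combination V30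
  have S321 : (d1x*((a2y + t23*d2y) - a1y) - d1y*((a2x + t23*d2x) - a1x)) = (t32 - t31)*(d1x*d3y - d1y*d3x) := by rw [E23x, E23y]; linear_combination V31
  have K01 : l0*(d0x*((a0y + t01*d0y) - a0y) - d0y*((a0x + t01*d0x) - a0x)) + l1*(d1x*((a0y + t01*d0y) - a1y) - d1y*((a0x + t01*d0x) - a1x)) + l2*(d2x*((a0y + t01*d0y) - a2y) - d2y*((a0x + t01*d0x) - a2x)) + l3*(d3x*((a0y + t01*d0y) - a3y) - d3y*((a0x + t01*d0x) - a3x)) = 0 := by rw [hl0, hl1, hl2, hl3]; exact ring1 a0x a0y d0x d0y a1x a1y d1x d1y a2x a2y d2x d2y a3x a3y d3x d3y (a0x + t01*d0x) (a0y + t01*d0y)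
  have K02 : l0*(d0x*((a0y + t02*d0y) - a0y) - d0y*((a0x + t02*d0x) - a0x)) + l1*(d1x*((a0y + t02*d0y) - a1y) - d1y*((a0x + t02*d0x) - a1x)) + l2*(d2x*((a0y + t02*d0y) - a2y) - d2y*((a0x + t02*d0x) - a2x)) + l3*(d3x*((a0y + t02*d0y) - a3y) - d3y*((a0x + t02*d0x) - a3x)) = 0 := by rw [hl0, hl1, hl2, hl3]; exact ring1 a0x a0y d0x d0y a1x a1y d1x d1y a2x a2y d2x d2y a3x a3y d3x d3y (a0x + t02*d0x) (a0y + t02*d0y)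
  have K03 : l0*(d0x*((a0y + t03*d0y) - a0y) - d0y*((a0x + t03*d0x) - a0x)) + l1*(d1x*((a0y + t03*d0y) - a1y) - d1y*((a0x + t03*d0x) - a1x)) + l2*(d2x*((a0y + t03*d0y) - a2y) - d2y*((a0x + t03*d0x) - a2x)) + l3*(d3x*((a0y + t03*d0y) - a3y) - d3y*((a0x + t03*d0x) - a3x)) = 0 := by rw [hl0, hl1, hl2, hl3]; exact ring1 a0x a0y d0x d0y a1x a1y d1x d1y a2x a2y d2x d2y a3x a3y d3x d3y (a0x + t03*d0x) (a0y + t03*d0y)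
  have K12 : l0*(d0x*((a1y + t12*d1y) - a0y) - d0y*((a1x + t12*d1x) - a0x)) + l1*(d1x*((a1y + t12*d1y) - a1y) - d1y*((a1x + t12*d1x) - a1x)) + l2*(d2x*((a1y + t12*d1y) - a2y) - d2y*((a1x + t12*d1x) - a2x)) + l3*(d3x*((a1y + t12*d1y) - a3y) - d3y*((a1x + t12*d1x) - a3x)) = 0 := by rw [hl0, hl1, hl2, hl3]; exact ring1 a0x a0y d0x d0y a1x a1y d1x d1y a2x a2y d2x d2y a3x a3y d3x d3y (a1x + t12*d1x) (a1y + t12*d1y)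
  have K13 : l0*(d0x*((a1y + t13*d1y) - a0y) - d0y*((a1x + t13*d1x) - a0x)) + l1*(d1x*((a1y + t13*d1y) - a1y) - d1y*((a1x + t13*d1x) - a1x)) + l2*(d2x*((a1y + t13*d1y) - a2y) - d2y*((a1x + t13*d1x) - a2x)) + l3*(d3x*((a1y + t13*d1y) - a3y) - d3y*((a1x + t13*d1x) - a3x)) = 0 := by rw [hl0, hl1, hl2, hl3]; exact ring1 a0x a0y d0x d0y a1x a1y d1x d1y a2x a2y d2x d2y a3x a3y d3x d3y (a1x + t13*d1x) (a1y + t13*d1y)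
  have K23 : l0*(d0x*((a2y + t23*d2y) - a0y) - d0y*((a2x + t23*d2x) - a0x)) + l1*(d1x*((a2y + t23*d2y) - a1y) - d1y*((a2x + t23*d2x) - a1x)) + l2*(d2x*((a2y + t23*d2y) - a2y) - d2y*((a2x + t23*d2x) - a2x)) + l3*(d3x*((a2y + t23*d2y) - a3y) - d3y*((a2x + t23*d2x) - a3x)) = 0 := by rw [hl0, hl1, hl2, hl3]; exact ring1 a0x a0y d0x d0y a1x a1y d1x d1y a2x a2y d2x d2y a3x a3y d3x d3y (a2x + t23*d2x) (a2y + t23*d2y)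
  have e0 : l0 = (d1x*d2y - d1y*d2x)*(d3x*((a1y + t12*d1y) - a3y) - d3y*((a1x + t12*d1x) - a3x)) := by rw [hl0]; linear_combination (ring2 d1x d1y a1x a1y d2x d2y a2x a2y d3x d3y a3x a3y (a1x + t12*d1x) (a1y + t12*d1y)) + (d3x*d1y - d3y*d1x)*V12
  have l0ne : l0 ≠ 0 := by rw [e0]; exact mul_ne_zero cr12 (by rw [S123]; exact mul_ne_zero (sub_ne_zero.mpr N1_23) cr31)
  have e1 : l1 = -((d0x*d2y - d0y*d2x)*(d3x*((a0y + t02*d0y) - a3y) - d3y*((a0x + t02*d0x) - a3x))) := by rw [hl1]; linear_combination (-1 : ℝ)*(ring2 d0x d0y a0x a0y d2x d2y a2x a2y d3x d3y a3x a3y (a0x + t02*d0x) (a0y + t02*d0y)) - (d3x*d0y - d3y*d0x)*V02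
  have l1ne : l1 ≠ 0 := by rw [e1]; exact neg_ne_zero.mpr (mul_ne_zero cr02 (by rw [S023]; exact mul_ne_zero (sub_ne_zero.mpr N0_23) cr30))
  have e2 : l2 = (d0x*d1y - d0y*d1x)*(d3x*((a0y + t01*d0y) - a3y) - d3y*((a0x + t01*d0x) - a3x)) := by rw [hl2]; linear_combination (ring2 d0x d0y a0x a0y d1x d1y a1x a1y d3x d3y a3x a3y (a0x + t01*d0x) (a0y + t01*d0y)) + (d3x*d0y - d3y*d0x)*V01
  have l2ne : l2 ≠ 0 := by rw [e2]; exact mul_ne_zero cr01 (by rw [S013]; exact mul_ne_zero (sub_ne_zero.mpr N0_13) cr30)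
  have e3 : l3 = -((d0x*d1y - d0y*d1x)*(d2x*((a0y + t01*d0y) - a2y) - d2y*((a0x + t01*d0x) - a2x))) := by rw [hl3]; linear_combination (-1 : ℝ)*(ring2 d0x d0y a0x a0y d1x d1y a1x a1y d2x d2y a2x a2y (a0x + t01*d0x) (a0y + t01*d0y)) - (d2x*d0y - d2y*d0x)*V01
  have l3ne : l3 ≠ 0 := by rw [e3]; exact neg_ne_zero.mpr (mul_ne_zero cr01 (by rw [S012]; exact mul_ne_zero (sub_ne_zero.mpr N0_12) cr20))
  obtain ⟨u01, hu01⟩ : ∃ u01 : ℝ, u01 = l2 * (d2x*((a0y + t01*d0y) - a2y) - d2y*((a0x + t01*d0x) - a2x)) := ⟨_, rfl⟩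
  obtain ⟨u02, hu02⟩ : ∃ u02 : ℝ, u02 = l1 * (d1x*((a0y + t02*d0y) - a1y) - d1y*((a0x + t02*d0x) - a1x)) := ⟨_, rfl⟩
  obtain ⟨u03, hu03⟩ : ∃ u03 : ℝ, u03 = l1 * (d1x*((a0y + t03*d0y) - a1y) - d1y*((a0x + t03*d0x) - a1x)) := ⟨_, rfl⟩
  obtain ⟨u12, hu12⟩ : ∃ u12 : ℝ, u12 = l0 * (d0x*((a1y + t12*d1y) - a0y) - d0y*((a1x + t12*d1x) - a0x)) := ⟨_, rfl⟩
  obtain ⟨u13, hu13⟩ : ∃ u13 : ℝ, u13 = l0 * (d0x*((a1y + t13*d1y) - a0y) - d0y*((a1x + t13*d1x) - a0x)) := ⟨_, rfl⟩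
  obtain ⟨u23, hu23⟩ : ∃ u23 : ℝ, u23 = l0 * (d0x*((a2y + t23*d2y) - a0y) - d0y*((a2x + t23*d2x) - a0x)) := ⟨_, rfl⟩
  have u01ne : u01 ≠ 0 := by rw [hu01]; exact mul_ne_zero l2ne (by rw [S012]; exact mul_ne_zero (sub_ne_zero.mpr N0_12) cr20)
  have u02ne : u02 ≠ 0 := by rw [hu02]; exact mul_ne_zero l1ne (by rw [S021]; exact mul_ne_zero (sub_ne_zero.mpr (Ne.symm N0_12)) cr10)
  have u03ne : u03 ≠ 0 := by rw [hu03]; exact mul_ne_zero l1ne (by rw [S031]; exact mul_ne_zero (sub_ne_zero.mpr (Ne.symm N0_13)) cr10)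
  have u12ne : u12 ≠ 0 := by rw [hu12]; exact mul_ne_zero l0ne (by rw [S120]; exact mul_ne_zero (sub_ne_zero.mpr (Ne.symm N1_02)) cr01)
  have u13ne : u13 ≠ 0 := by rw [hu13]; exact mul_ne_zero l0ne (by rw [S130]; exact mul_ne_zero (sub_ne_zero.mpr (Ne.symm N1_03)) cr01)
  have u23ne : u23 ≠ 0 := by rw [hu23]; exact mul_ne_zero l0ne (by rw [S230]; exact mul_ne_zero (sub_ne_zero.mpr (Ne.symm N2_03)) cr02)
  have relu01 : u01 = -(l3 * (d3x*((a0y + t01*d0y) - a3y) - d3y*((a0x + t01*d0x) - a3x))) := by rw [hu01]; linear_combination K01 - l0*VS01 - l1*V01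
  have relu02 : u02 = -(l3 * (d3x*((a0y + t02*d0y) - a3y) - d3y*((a0x + t02*d0x) - a3x))) := by rw [hu02]; linear_combination K02 - l0*VS02 - l2*V02
  have relu03 : u03 = -(l2 * (d2x*((a0y + t03*d0y) - a2y) - d2y*((a0x + t03*d0x) - a2x))) := by rw [hu03]; linear_combination K03 - l0*VS03 - l3*V03
  have relu12 : u12 = -(l3 * (d3x*((a1y + t12*d1y) - a3y) - d3y*((a1x + t12*d1x) - a3x))) := by rw [hu12]; linear_combination K12 - l1*VS12 - l2*V12
  have relu13 : u13 = -(l2 * (d2x*((a1y + t13*d1y) - a2y) - d2y*((a1x + t13*d1x) - a2x))) := by rw [hu13]; linear_combination K13 - l1*VS13 - l3*V13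
  have relu23 : u23 = -(l1 * (d1x*((a2y + t23*d2y) - a1y) - d1y*((a2x + t23*d2x) - a1x))) := by rw [hu23]; linear_combination K23 - l2*VS23 - l3*V23
  have pr01 : u02*u03 = (l1*(d1x*d0y - d1y*d0x))^2 * ((t02-t01)*(t03-t01)) := by rw [hu02, hu03, S021, S031]; ring
  have pr02 : u01*u03 = -((l2*(d2x*d0y - d2y*d0x))^2 * ((t01-t02)*(t03-t02))) := by rw [hu01, relu03, S012, S032]; ring
  have pr03 : u01*u02 = (l3*(d3x*d0y - d3y*d0x))^2 * ((t01-t03)*(t02-t03)) := by rw [relu01, relu02, S013, S023]; ring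
  have pr10 : u12*u13 = (l0*(d0x*d1y - d0y*d1x))^2 * ((t12-t10)*(t13-t10)) := by rw [hu12, hu13, S120, S130]; ring
  have pr12 : u01*u13 = -((l2*(d2x*d1y - d2y*d1x))^2 * ((t10-t12)*(t13-t12))) := by rw [hu01, relu13, S102, S132]; ring
  have pr13 : u01*u12 = (l3*(d3x*d1y - d3y*d1x))^2 * ((t10-t13)*(t12-t13)) := by rw [relu01, relu12, S103, S123]; ring
  have pr20 : u12*u23 = (l0*(d0x*d2y - d0y*d2x))^2 * ((t21-t20)*(t23-t20)) := by rw [hu12, hu23, S210, S230]; ring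
  have pr21 : u02*u23 = -((l1*(d1x*d2y - d1y*d2x))^2 * ((t20-t21)*(t23-t21))) := by rw [hu02, relu23, S201, S231]; ring
  have pr23 : u02*u12 = (l3*(d3x*d2y - d3y*d2x))^2 * ((t20-t23)*(t21-t23)) := by rw [relu02, relu12, S203, S213]; ring
  have pr30 : u13*u23 = (l0*(d0x*d3y - d0y*d3x))^2 * ((t31-t30)*(t32-t30)) := by rw [hu13, hu23, S310, S320]; ring
  have pr31 : u03*u23 = -((l1*(d1x*d3y - d1y*d3x))^2 * ((t30-t31)*(t32-t31))) := by rw [hu03, relu23, S301, S321]; ring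
  have pr32 : u03*u13 = (l2*(d2x*d3y - d2y*d3x))^2 * ((t30-t32)*(t31-t32)) := by rw [relu03, relu13, S302, S312]; ring
  refine prop_core (0<u01) (0<u02) (0<u03) (0<u12) (0<u13) (0<u23) ?_ ?_ ?_ ?_ ?_ ?_ ?_ ?_ ?_ ?_
  · rintro ⟨h1, h2⟩
    have m1 := sqf1 (mul_ne_zero l1ne cr10) (pr01 ▸ (sgn_mul_neg u02ne u03ne).mpr h1)
    have m2 := sqf2 (mul_ne_zero l2ne cr20) (pr02 ▸ (sgn_mul_pos u01ne u03ne).mpr h2)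
    exact mid_unique m1 m2
  · rintro ⟨h1, h2⟩
    have m1 := sqf1 (mul_ne_zero l0ne cr01) (pr10 ▸ (sgn_mul_neg u12ne u13ne).mpr h1)
    have m2 := sqf2 (mul_ne_zero l2ne cr21) (pr12 ▸ (sgn_mul_pos u01ne u13ne).mpr h2)
    exact mid_unique m1 m2
  · rintro ⟨h1, h2⟩
    have m1 := sqf1 (mul_ne_zero l0ne cr02) (pr20 ▸ (sgn_mul_neg u12ne u23ne).mpr h1)
    have m2 := sqf2 (mul_ne_zero l1ne cr12) (pr21 ▸ (sgn_mul_pos u02ne u23ne).mpr h2)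
    exact mid_unique m1 m2
  · rintro ⟨h1, h2⟩
    have m1 := sqf1 (mul_ne_zero l0ne cr03) (pr30 ▸ (sgn_mul_neg u13ne u23ne).mpr h1)
    have m2 := sqf2 (mul_ne_zero l1ne cr13) (pr31 ▸ (sgn_mul_pos u03ne u23ne).mpr h2)
    exact mid_unique m1 m2
  · rintro ⟨h1, h2⟩
    have m1 := sqf1 (mul_ne_zero l1ne cr10) (pr01 ▸ (sgn_mul_neg u02ne u03ne).mpr h1)
    have m2 := sqf1 (mul_ne_zero l0ne cr01) (pr10 ▸ (sgn_mul_neg u12ne u13ne).mpr h2)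
    obtain ⟨p1, p2⟩ := between_open m1 B02a B02b B03a B03b
    obtain ⟨q1, q2⟩ := between_open m2 B12a B12b B13a B13b
    rcases H01 with h|h|h|h <;> linarith
  · rintro ⟨h1, h2⟩
    have m1 := sqf2 (mul_ne_zero l2ne cr20) (pr02 ▸ (sgn_mul_pos u01ne u03ne).mpr h1)
    have m2 := sqf1 (mul_ne_zero l0ne cr02) (pr20 ▸ (sgn_mul_neg u12ne u23ne).mpr h2)
    obtain ⟨p1, p2⟩ := between_open m1 B01a B01b B03a B03b
    obtain ⟨q1, q2⟩ := between_open m2 B21a B21b B23a B23b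
    rcases H02 with h|h|h|h <;> linarith
  · rintro ⟨h1, h2⟩
    have m1 := sqf1 (mul_ne_zero l3ne cr30) (pr03 ▸ (sgn_mul_neg u01ne u02ne).mpr h1)
    have m2 := sqf1 (mul_ne_zero l0ne cr03) (pr30 ▸ (sgn_mul_neg u13ne u23ne).mpr h2)
    obtain ⟨p1, p2⟩ := between_open m1 B01a B01b B02a B02b
    obtain ⟨q1, q2⟩ := between_open m2 B31a B31b B32a B32b
    rcases H03 with h|h|h|h <;> linarith
  · rintro ⟨h1, h2⟩
    have m1 := sqf2 (mul_ne_zero l2ne cr21) (pr12 ▸ (sgn_mul_pos u01ne u13ne).mpr h1)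
    have m2 := sqf2 (mul_ne_zero l1ne cr12) (pr21 ▸ (sgn_mul_pos u02ne u23ne).mpr h2)
    obtain ⟨p1, p2⟩ := between_open m1 B10a B10b B13a B13b
    obtain ⟨q1, q2⟩ := between_open m2 B20a B20b B23a B23b
    rcases H12 with h|h|h|h <;> linarith
  · rintro ⟨h1, h2⟩
    have m1 := sqf1 (mul_ne_zero l3ne cr31) (pr13 ▸ (sgn_mul_neg u01ne u12ne).mpr h1)
    have m2 := sqf2 (mul_ne_zero l1ne cr13) (pr31 ▸ (sgn_mul_pos u03ne u23ne).mpr h2)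
    obtain ⟨p1, p2⟩ := between_open m1 B10a B10b B12a B12b
    obtain ⟨q1, q2⟩ := between_open m2 B30a B30b B32a B32b
    rcases H13 with h|h|h|h <;> linarith
  · rintro ⟨h1, h2⟩
    have m1 := sqf1 (mul_ne_zero l3ne cr32) (pr23 ▸ (sgn_mul_neg u02ne u12ne).mpr h1)
    have m2 := sqf1 (mul_ne_zero l2ne cr23) (pr32 ▸ (sgn_mul_neg u03ne u13ne).mpr h2)
    obtain ⟨p1, p2⟩ := between_open m1 B20a B20b B21a B21b
    obtain ⟨q1, q2⟩ := between_open m2 B30a B30b B31a B31b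
    rcases H23 with h|h|h|h <;> linarith

/-- cross product of two plane vectors -/
def crs (u v : Pt) : ℝ := u.1 * v.2 - u.2 * v.1

lemma par_of_crs {u v : Pt} (h : crs u v = 0) (hu : u ≠ 0) : ∃ μ : ℝ, v = μ • u := by
  unfold crs at h
  by_cases h1 : u.1 = 0
  · have h2 : u.2 ≠ 0 := fun h2 => hu (Prod.ext h1 h2)
    refine ⟨v.2 / u.2, Prod.ext ?_ ?_⟩
    · have : u.2 * v.1 = 0 := by rw [h1] at h; linarith
      have : v.1 = 0 := by rcases mul_eq_zero.mp this with h'|h'; exact absurd h' h2; exact h'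
      simp [this, h1]
    · simp; field_simp
  · refine ⟨v.1 / u.1, Prod.ext ?_ ?_⟩
    · simp; field_simp
    · simp; field_simp; linarith

lemma three_in_pair {α : Type*} {x y z p q : α} (hxy : x ≠ y) (hxz : x ≠ z) (hyz : y ≠ z)
    (hx : x = p ∨ x = q) (hy : y = p ∨ y = q) (hz : z = p ∨ z = q) : False := by
  rcases hx with rfl|rfl <;> rcases hy with rfl|rfl <;> rcases hz with rfl|rfl <;> simp_all

lemma K4 (P : Fin 4 → Pt × Pt) (hc : InContactPosition P)
    (hi : ∀ i j : Fin 4, (seg (P i) ∩ seg (P j)).Nonempty) :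
    ∃ z : Pt, ∃ i0 : Fin 4, ∀ j, j ≠ i0 → z ∈ seg (P j) := by
  by_contra hno
  push_neg at hno
  -- no point lies on three segments
  have no3 : ∀ (z : Pt) (i j k : Fin 4), i ≠ j → i ≠ k → j ≠ k →
      z ∈ seg (P i) → z ∈ seg (P j) → z ∈ seg (P k) → False := by
    intro z i j k hij hik hjk h1 h2 h3
    obtain ⟨m, hmi, hmj, hmk⟩ :=
      (by decide : ∀ i j k : Fin 4, i ≠ j → i ≠ k → j ≠ k →
        ∃ m, m ≠ i ∧ m ≠ j ∧ m ≠ k) i j k hij hik hjk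
    obtain ⟨j', hj'm, hj'⟩ := hno z m
    have : j' = i ∨ j' = j ∨ j' = k :=
      (by decide : ∀ m i j k j' : Fin 4, i ≠ j → i ≠ k → j ≠ k → m ≠ i → m ≠ j → m ≠ k → j' ≠ m →
        j' = i ∨ j' = j ∨ j' = k) m i j k j' hij hik hjk hmi hmj hmk hj'm
    rcases this with rfl|rfl|rfl <;> exact hj' ‹_›
  -- contact points
  have hcp : ∀ i j : Fin 4, ∃ z, z ∈ seg (P i) ∧ z ∈ seg (P j) := by
    intro i j; obtain ⟨z, hz⟩ := hi i j; exact ⟨z, hz.1, hz.2⟩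
  choose c hc1 hc2 using hcp
  have uniq : ∀ i j, i ≠ j → ∀ w, w ∈ seg (P i) → w ∈ seg (P j) → w = c i j := by
    intro i j hij w h1 h2
    exact seg_inter_subsingleton (hc i j hij) ⟨h1, h2⟩ ⟨hc1 i j, hc2 i j⟩
  have csymm : ∀ i j, i ≠ j → c j i = c i j := by
    intro i j hij; exact uniq i j hij (c j i) (hc2 j i) (hc1 j i)
  have epc : ∀ i j, i ≠ j → c i j = (P i).1 ∨ c i j = (P i).2 ∨ c i j = (P j).1 ∨ c i j = (P j).2 :=
    fun i j hij => hc i j hij (c i j) (hc1 i j) (hc2 i j)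
  -- contacts on a common segment are pairwise distinct
  have hdist : ∀ i j k, i ≠ j → i ≠ k → j ≠ k → c i j ≠ c i k := by
    intro i j k hij hik hjk heq
    exact no3 (c i j) i j k hij hik hjk (hc1 i j) (hc2 i j) (heq ▸ hc2 i k)
  -- nondegenerate
  have hnd : ∀ i : Fin 4, (P i).1 ≠ (P i).2 := by
    intro i hdeg
    obtain ⟨a, b, c', hab, hac, hbc, ha, hb, hc''⟩ :=
      (by decide : ∀ i : Fin 4, ∃ a b c' : Fin 4, a ≠ b ∧ a ≠ c' ∧ b ≠ c' ∧
        a ≠ i ∧ b ≠ i ∧ c' ≠ i) i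
    have hseg : seg (P i) = {(P i).1} := by rw [seg, ← hdeg, segment_same]
    have hmem : ∀ j, j ≠ i → (P i).1 ∈ seg (P j) := by
      intro j hj
      have := hc1 i j
      rw [hseg] at this
      have h2 := hc2 i j
      rwa [Set.eq_of_mem_singleton this] at h2
    exact no3 (P i).1 a b c' hab hac hbc (hmem a ha) (hmem b hb) (hmem c' hc'')
  -- direction vectors
  set dv : Fin 4 → Pt := fun i => (P i).2 - (P i).1 with hdv
  have hdvne : ∀ i, dv i ≠ 0 := fun i h => hnd i (by
    have := sub_eq_zero.mp h; exact this.symm)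
  -- parameters
  have hpar : ∀ i j : Fin 4, ∃ t : ℝ, 0 ≤ t ∧ t ≤ 1 ∧ c i j = (P i).1 + t • dv i := by
    intro i j; exact mem_seg_iff.mp (hc1 i j)
  choose τ hτ0 hτ1 hτe using hpar
  -- same-line parameter distinctness
  have hτne : ∀ i j k, i ≠ j → i ≠ k → j ≠ k → τ i j ≠ τ i k := by
    intro i j k hij hik hjk heq
    exact hdist i j k hij hik hjk (by rw [hτe i j, hτe i k, heq])
  -- endpoint condition in parameter form
  have param_cancel : ∀ {d a : Pt} {s t : ℝ}, d ≠ 0 → a + s • d = a + t • d → s = t := by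
    intro d a s t hd h
    have h2 : (s - t) • d = 0 := by
      have := add_left_cancel h
      rw [sub_smul, this, sub_self]
    rcases smul_eq_zero.mp h2 with h3 | h3
    · linarith [sub_eq_zero.mp (by linarith [h3] : s - t = 0)]
    · exact absurd h3 hd
  have hBpt : ∀ i : Fin 4, (P i).1 + (1:ℝ) • dv i = (P i).2 := by
    intro i; rw [one_smul, hdv]; exact add_sub_cancel _ _
  have hApt : ∀ i : Fin 4, (P i).1 + (0:ℝ) • dv i = (P i).1 := by
    intro i; rw [zero_smul, add_zero]
  have hH : ∀ i j, i ≠ j → τ i j = 0 ∨ τ i j = 1 ∨ τ j i = 0 ∨ τ j i = 1 := by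
    intro i j hij
    rcases epc i j hij with h | h | h | h
    · have heq : (P i).1 + τ i j • dv i = (P i).1 + (0:ℝ) • dv i := by
        rw [← hτe i j, h, hApt]
      exact Or.inl (param_cancel (hdvne i) heq)
    · have heq : (P i).1 + τ i j • dv i = (P i).1 + (1:ℝ) • dv i := by
        rw [← hτe i j, h, hBpt]
      exact Or.inr (Or.inl (param_cancel (hdvne i) heq))
    · have heq : (P j).1 + τ j i • dv j = (P j).1 + (0:ℝ) • dv j := by
        rw [← hτe j i, csymm i j hij, h, hApt]
      exact Or.inr (Or.inr (Or.inl (param_cancel (hdvne j) heq)))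
    · have heq : (P j).1 + τ j i • dv j = (P j).1 + (1:ℝ) • dv j := by
        rw [← hτe j i, csymm i j hij, h, hBpt]
      exact Or.inr (Or.inr (Or.inr (param_cancel (hdvne j) heq)))
  by_cases hcr : ∀ i j : Fin 4, i ≠ j → crs (dv i) (dv j) ≠ 0
  · -- main case : complete quadrilateral
    have hE : ∀ i j, i ≠ j → (P i).1 + τ i j • dv i = (P j).1 + τ j i • dv j := by
      intro i j hij
      rw [← hτe i j, ← csymm i j hij]; exact hτe j i
    have hEx : ∀ i j, i ≠ j → (P i).1.1 + τ i j * (dv i).1 = (P j).1.1 + τ j i * (dv j).1 := by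
      intro i j hij
      have := congrArg Prod.fst (hE i j hij)
      simpa [Prod.fst_add, Prod.smul_fst, smul_eq_mul] using this
    have hEy : ∀ i j, i ≠ j → (P i).1.2 + τ i j * (dv i).2 = (P j).1.2 + τ j i * (dv j).2 := by
      intro i j hij
      have := congrArg Prod.snd (hE i j hij)
      simpa [Prod.snd_add, Prod.smul_snd, smul_eq_mul] using this
    have hcrs : ∀ i j, i ≠ j → (dv i).1 * (dv j).2 - (dv i).2 * (dv j).1 ≠ 0 := fun i j h => hcr i j h
    exact quad_core (P 0).1.1 (P 0).1.2 (dv 0).1 (dv 0).2 (P 1).1.1 (P 1).1.2 (dv 1).1 (dv 1).2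
      (P 2).1.1 (P 2).1.2 (dv 2).1 (dv 2).2 (P 3).1.1 (P 3).1.2 (dv 3).1 (dv 3).2
      (τ 0 1) (τ 0 2) (τ 0 3) (τ 1 0) (τ 1 2) (τ 1 3) (τ 2 0) (τ 2 1) (τ 2 3) (τ 3 0) (τ 3 1) (τ 3 2)
      (hcrs 0 1 (by decide)) (hcrs 0 2 (by decide)) (hcrs 0 3 (by decide))
      (hcrs 1 2 (by decide)) (hcrs 1 3 (by decide)) (hcrs 2 3 (by decide))
      (hEx 0 1 (by decide)) (hEy 0 1 (by decide)) (hEx 0 2 (by decide)) (hEy 0 2 (by decide))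
      (hEx 0 3 (by decide)) (hEy 0 3 (by decide)) (hEx 1 2 (by decide)) (hEy 1 2 (by decide))
      (hEx 1 3 (by decide)) (hEy 1 3 (by decide)) (hEx 2 3 (by decide)) (hEy 2 3 (by decide))
      (hτ0 0 1) (hτ1 0 1) (hτ0 0 2) (hτ1 0 2) (hτ0 0 3) (hτ1 0 3)
      (hτ0 1 0) (hτ1 1 0) (hτ0 1 2) (hτ1 1 2) (hτ0 1 3) (hτ1 1 3)
      (hτ0 2 0) (hτ1 2 0) (hτ0 2 1) (hτ1 2 1) (hτ0 2 3) (hτ1 2 3)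
      (hτ0 3 0) (hτ1 3 0) (hτ0 3 1) (hτ1 3 1) (hτ0 3 2) (hτ1 3 2)
      (hH 0 1 (by decide)) (hH 0 2 (by decide)) (hH 0 3 (by decide))
      (hH 1 2 (by decide)) (hH 1 3 (by decide)) (hH 2 3 (by decide))
      (hτne 0 1 2 (by decide) (by decide) (by decide)) (hτne 0 1 3 (by decide) (by decide) (by decide))
      (hτne 0 2 3 (by decide) (by decide) (by decide)) (hτne 1 0 2 (by decide) (by decide) (by decide))
      (hτne 1 0 3 (by decide) (by decide) (by decide)) (hτne 1 2 3 (by decide) (by decide) (by decide))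
      (hτne 2 0 1 (by decide) (by decide) (by decide)) (hτne 2 0 3 (by decide) (by decide) (by decide))
      (hτne 2 1 3 (by decide) (by decide) (by decide)) (hτne 3 0 1 (by decide) (by decide) (by decide))
      (hτne 3 0 2 (by decide) (by decide) (by decide)) (hτne 3 1 2 (by decide) (by decide) (by decide))
  · -- collinear case
    push_neg at hcr
    obtain ⟨i, j, hij, h0⟩ := hcr
    have h0' : (dv i).1 * (dv j).2 - (dv i).2 * (dv j).1 = 0 := h0
    have hdiff : ∀ a b b', a ≠ b → a ≠ b' → c a b - c a b' = (τ a b - τ a b') • dv a := by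
      intro a b b' _ _
      rw [hτe a b, hτe a b', add_sub_add_left_eq_sub, ← sub_smul]
    -- every direction is parallel to dv i
    have hpari : ∀ a, (dv a).1 * (dv i).2 - (dv a).2 * (dv i).1 = 0 := by
      intro a
      by_cases hai : a = i
      · subst hai; ring
      by_cases haj : a = j
      · subst haj; linear_combination -h0'
      · have h1 := hdiff i a j (Ne.symm hai) hij
        have h2 := hdiff j a i (Ne.symm haj) (Ne.symm hij)
        have h3 := hdiff a i j hai haj
        rw [csymm i j hij] at h2
        rw [csymm i a (Ne.symm hai)] at h3
        rw [csymm j a (Ne.symm haj)] at h3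
        have hne : c i a ≠ c j a := by
          intro heq
          exact no3 (c i a) i j a hij (Ne.symm hai) (Ne.symm haj)
            (hc1 i a) (heq ▸ hc1 j a) (hc2 i a)
        have hv : (τ a i - τ a j) • dv a = (τ i a - τ i j) • dv i - (τ j a - τ j i) • dv j := by
          rw [← h1, ← h2, ← h3]; abel
        have Ex := congrArg Prod.fst hv
        have Ey := congrArg Prod.snd hv
        simp only [Prod.smul_fst, Prod.smul_snd, Prod.fst_sub, Prod.snd_sub, smul_eq_mul] at Ex Ey
        have hτia : τ a i ≠ τ a j := hτne a i j hai haj hij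
        have hmul : (τ a i - τ a j) * ((dv a).1 * (dv i).2 - (dv a).2 * (dv i).1) = 0 := by
          linear_combination (dv i).2 * Ex - (dv i).1 * Ey + (τ j a - τ j i) * h0'
        rcases mul_eq_zero.mp hmul with h | h
        · exact absurd (by linarith : τ a i = τ a j) hτia
        · exact h
    have hparall : ∀ a b, (dv a).1 * (dv b).2 - (dv a).2 * (dv b).1 = 0 := by
      intro a b
      have h1 := hpari a
      have h2 := hpari b
      have hine : (dv i).1 ≠ 0 ∨ (dv i).2 ≠ 0 := by
        by_contra hco
        push_neg at hco
        exact hdvne i (Prod.ext hco.1 hco.2)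
      rcases hine with hi1 | hi2
      · have hx : (dv i).1 * ((dv a).1 * (dv b).2 - (dv a).2 * (dv b).1) = 0 := by
          linear_combination (dv b).1 * h1 - (dv a).1 * h2
        rcases mul_eq_zero.mp hx with h | h
        · exact absurd h hi1
        · exact h
      · have hy : (dv i).2 * ((dv a).1 * (dv b).2 - (dv a).2 * (dv b).1) = 0 := by
          linear_combination (dv b).2 * h1 - (dv a).2 * h2
        rcases mul_eq_zero.mp hy with h | h
        · exact absurd h hi2
        · exact h
    -- each contact point is an endpoint of both segments
    have Hend : ∀ u v, u ≠ v → c u v = (P u).1 ∨ c u v = (P u).2 := by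
      intro u v huv
      by_contra hneg
      push_neg at hneg
      obtain ⟨hne1, hne2⟩ := hneg
      have ht0 : τ u v ≠ 0 := fun h => hne1 (by rw [hτe u v, h, hApt])
      have ht1 : τ u v ≠ 1 := fun h => hne2 (by rw [hτe u v, h, hBpt])
      have htl : 0 < τ u v := lt_of_le_of_ne (hτ0 u v) (Ne.symm ht0)
      have htr : τ u v < 1 := lt_of_le_of_ne (hτ1 u v) ht1
      set z := c u v with hz
      -- choose an endpoint w of segment v with w ≠ z
      have hw : ∃ (e : ℝ), (0 ≤ e ∧ e ≤ 1) ∧ (P v).1 + e • dv v ≠ z := by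
        by_cases h1 : (P v).1 = z
        · refine ⟨1, ⟨zero_le_one, le_refl 1⟩, ?_⟩
          rw [hBpt]
          intro h2
          exact hnd v (by rw [h1, ← h2])
        · exact ⟨0, ⟨le_refl 0, zero_le_one⟩, by rwa [hApt]⟩
      obtain ⟨e, ⟨he0, he1⟩, hwne⟩ := hw
      set w := (P v).1 + e • dv v with hwdef
      have hwv : w ∈ seg (P v) := mem_seg_iff.mpr ⟨e, he0, he1, rfl⟩
      have hzv : z ∈ seg (P v) := hc2 u v
      obtain ⟨μ, hμ⟩ := par_of_crs (hparall u v) (hdvne u)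
      have hzv' : z = (P v).1 + τ v u • dv v := by rw [hz, ← csymm u v huv]; exact hτe v u
      set σ := (e - τ v u) * μ with hσ
      have hwz : w - z = σ • dv u := by
        rw [hwdef, hzv', add_sub_add_left_eq_sub, ← sub_smul, hμ, smul_smul]
      have hσne : σ ≠ 0 := by
        intro h
        apply hwne
        have : w - z = 0 := by rw [hwz, h, zero_smul]
        exact sub_eq_zero.mp this
      have habs : 0 < |σ| := abs_pos.mpr hσne
      set m := min (τ u v) (1 - τ u v) with hm
      have hmpos : 0 < m := lt_min htl (by linarith)
      set t := min 1 (m / |σ|) with ht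
      have htpos : 0 < t := lt_min zero_lt_one (div_pos hmpos habs)
      have ht1' : t ≤ 1 := min_le_left _ _
      have htσ : t * |σ| ≤ m := by
        have h' : t ≤ m / |σ| := min_le_right _ _
        calc t * |σ| ≤ (m / |σ|) * |σ| := by exact mul_le_mul_of_nonneg_right h' habs.le
        _ = m := div_mul_cancel₀ _ (ne_of_gt habs)
      have htσ1 : t * σ ≤ t * |σ| := mul_le_mul_of_nonneg_left (le_abs_self σ) htpos.le
      have htσ2 : -(t * |σ|) ≤ t * σ := by
        have := mul_le_mul_of_nonneg_left (neg_abs_le σ) htpos.le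
        linarith
      set z' := z + t • (w - z) with hz'
      have hz'v : z' ∈ seg (P v) := by
        have hmem : z' ∈ segment ℝ z w := by
          rw [segment_eq_image']
          exact ⟨t, ⟨htpos.le, ht1'⟩, rfl⟩
        exact (convex_segment (P v).1 (P v).2).segment_subset hzv hwv hmem
      have hz'u : z' ∈ seg (P u) := by
        apply mem_seg_iff.mpr
        refine ⟨τ u v + t * σ, ?_, ?_, ?_⟩
        · have := min_le_left (τ u v) (1 - τ u v); linarith
        · have := min_le_right (τ u v) (1 - τ u v); linarith
        · rw [hz', hwz, smul_smul, hz, hτe u v, add_assoc, ← add_smul]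
      have hz'ne : z' ≠ z := by
        intro h
        have h2 : t • (w - z) = 0 := by
          have := congrArg (fun x => x - z) h
          simpa [hz'] using this
        rw [hwz, smul_smul] at h2
        rcases smul_eq_zero.mp h2 with h3 | h3
        · exact mul_ne_zero (ne_of_gt htpos) hσne h3
        · exact hdvne u h3
      exact hz'ne (uniq u v huv z' hz'u hz'v)
    -- pigeonhole: segment i has three distinct contacts, all endpoints of segment i
    obtain ⟨a, b, b', hab, hab', hbb', ha, hb, hb''⟩ :=
      (by decide : ∀ i : Fin 4, ∃ a b c' : Fin 4, a ≠ b ∧ a ≠ c' ∧ b ≠ c' ∧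
        a ≠ i ∧ b ≠ i ∧ c' ≠ i) i
    exact three_in_pair (hdist i a b (Ne.symm ha) (Ne.symm hb) hab)
      (hdist i a b' (Ne.symm ha) (Ne.symm hb'') hab')
      (hdist i b b' (Ne.symm hb) (Ne.symm hb'') hbb')
      (Hend i a (Ne.symm ha)) (Hend i b (Ne.symm hb)) (Hend i b' (Ne.symm hb''))

lemma vec4_ne {α : Type*} {u v x y : α} (h1 : u ≠ v) (h2 : u ≠ x) (h3 : u ≠ y)
    (h4 : v ≠ x) (h5 : v ≠ y) (h6 : x ≠ y) :
    ∀ a b : Fin 4, a ≠ b → (![u,v,x,y] : Fin 4 → α) a ≠ ![u,v,x,y] b := by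
  intro a b hab
  fin_cases a <;> fin_cases b <;>
    first
      | exact absurd rfl hab
      | exact h1 | exact h2 | exact h3 | exact h4 | exact h5 | exact h6
      | exact h1.symm | exact h2.symm | exact h3.symm | exact h4.symm
      | exact h5.symm | exact h6.symm

lemma main : ∀ (n : ℕ) (s : Fin n → Pt × Pt), InContactPosition s →
    (∀ i j, (seg (s i) ∩ seg (s j)).Nonempty) →
    ∃ p : Pt, n - 1 ≤ {i : Fin n | p ∈ seg (s i)}.ncard := by
  intro n
  induction n with
  | zero => intro s _ _; exact ⟨(0, 0), by simp⟩
  | succ m ih =>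
    intro s hc hi
    by_cases hm : m ≤ 2
    · -- small cases n ≤ 3
      rcases Nat.eq_zero_or_pos m with rfl | hm1
      · exact ⟨(s 0).1, by simp⟩
      · have h01 : (⟨0, by omega⟩ : Fin (m+1)) ≠ ⟨1, by omega⟩ :=
          Fin.ne_of_val_ne (by norm_num)
        obtain ⟨p, hp0, hp1⟩ := hi ⟨0, by omega⟩ ⟨1, by omega⟩
        refine ⟨p, ?_⟩
        have hsub : ({⟨0, by omega⟩, ⟨1, by omega⟩} : Set (Fin (m+1))) ⊆ {i | p ∈ seg (s i)} := by
          intro i hi'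
          rcases hi' with rfl | hi'
          · exact hp0
          · rw [Set.mem_singleton_iff] at hi'; subst hi'; exact hp1
        have h2 : 2 ≤ {i : Fin (m+1) | p ∈ seg (s i)}.ncard := by
          rw [← Set.ncard_pair h01]
          exact Set.ncard_le_ncard hsub (Set.toFinite _)
        omega
    · -- main induction step, n ≥ 4
      push_neg at hm
      set s' : Fin m → Pt × Pt := fun i => s i.castSucc with hs'
      have hc' : InContactPosition s' := fun i j hij =>
        hc i.castSucc j.castSucc (fun h => hij (Fin.castSucc_injective m h))
      have hi' : ∀ i j, (seg (s' i) ∩ seg (s' j)).Nonempty := fun i j => hi _ _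
      obtain ⟨p, hp⟩ := ih s' hc' hi'
      set Bs : Set (Fin m) := {i | p ∉ seg (s' i)} with hBs
      have hBsc : {i : Fin m | p ∈ seg (s' i)} = Bsᶜ := by
        ext i; simp [hBs]
      have hcards : Bs.ncard + Bsᶜ.ncard = m := by
        rw [Set.ncard_add_ncard_compl]; simp
      have hBs1 : Bs.ncard ≤ 1 := by
        rw [hBsc] at hp; omega
      have hBsing : ∀ x ∈ Bs, ∀ y ∈ Bs, x = y := (Set.ncard_le_one (Set.toFinite _)).mp hBs1
      set B : Set (Fin (m+1)) := {i | p ∉ seg (s i)} with hB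
      have hBsub : ∀ x ∈ B, ∀ y ∈ B, x ≠ Fin.last m → y ≠ Fin.last m → x = y := by
        intro x hx y hy hxl hyl
        obtain ⟨x', rfl⟩ := Fin.exists_castSucc_eq.mpr hxl
        obtain ⟨y', rfl⟩ := Fin.exists_castSucc_eq.mpr hyl
        have hx' : x' ∈ Bs := hx
        have hy' : y' ∈ Bs := hy
        rw [hBsing x' hx' y' hy']
      by_cases hBone : ∀ x ∈ B, ∀ y ∈ B, x = y
      · refine ⟨p, ?_⟩
        have h1 : B.ncard ≤ 1 := (Set.ncard_le_one (Set.toFinite _)).mpr hBone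
        have h2 : B.ncard + Bᶜ.ncard = m + 1 := by
          rw [Set.ncard_add_ncard_compl]; simp
        have h3 : {i : Fin (m+1) | p ∈ seg (s i)} = Bᶜ := by
          ext i; simp [hB]
        rw [h3]; omega
      · push_neg at hBone
        obtain ⟨x, hx, y, hy, hxy⟩ := hBone
        have hBxy : ∀ z ∈ B, z = x ∨ z = y := by
          intro z hz
          by_contra hcon
          push_neg at hcon
          obtain ⟨hzx, hzy⟩ := hcon
          by_cases h1 : x = Fin.last m
          · by_cases h2 : y = Fin.last m
            · exact hxy (h1.trans h2.symm)
            · exact hzy (hBsub z hz y hy (fun hzl => hzx (hzl.trans h1.symm)) h2)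
          · by_cases h2 : y = Fin.last m
            · exact hzx (hBsub z hz x hx (fun hzl => hzy (hzl.trans h2.symm)) h1)
            · exact hxy (hBsub x hx y hy h1 h2)
        obtain ⟨q, hqx, hqy⟩ := hi x y
        have huniq : ∀ w, w ∈ seg (s x) → w ∈ seg (s y) → w = q :=
          fun w h1 h2 => seg_inter_subsingleton (hc x y hxy) ⟨h1, h2⟩ ⟨hqx, hqy⟩
        refine ⟨q, ?_⟩
        set Bq : Set (Fin (m+1)) := {i | q ∉ seg (s i)} with hBq
        have hbadq : ∀ u ∈ Bq, ∀ v ∈ Bq, u = v := by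
          intro u hu v hv
          by_contra huv
          have hux : u ≠ x := fun h => hu (h ▸ hqx)
          have huy : u ≠ y := fun h => hu (h ▸ hqy)
          have hvx : v ≠ x := fun h => hv (h ▸ hqx)
          have hvy : v ≠ y := fun h => hv (h ▸ hqy)
          have hpu : p ∈ seg (s u) := by
            by_contra h
            rcases hBxy u h with rfl | rfl
            · exact hux rfl
            · exact huy rfl
          have hpv : p ∈ seg (s v) := by
            by_contra h
            rcases hBxy v h with rfl | rfl
            · exact hvx rfl
            · exact hvy rfl
          set f : Fin 4 → Fin (m+1) := ![u, v, x, y] with hf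
          have hfne : ∀ a b : Fin 4, a ≠ b → f a ≠ f b :=
            vec4_ne huv hux huy hvx hvy hxy
          obtain ⟨z, i0, hz⟩ := K4 (s ∘ f)
            (fun a b hab => hc (f a) (f b) (hfne a b hab))
            (fun a b => hi (f a) (f b))
          have hzmem : ∀ a : Fin 4, a ≠ i0 → z ∈ seg (s (f a)) := fun a ha => hz a ha
          have hf0 : f 0 = u := by rw [hf]; rfl
          have hf1 : f 1 = v := by rw [hf]; rfl
          have hf2 : f 2 = x := by rw [hf]; rfl
          have hf3 : f 3 = y := by rw [hf]; rfl
          have hxB : p ∉ seg (s x) := hx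
          have hyB : p ∉ seg (s y) := hy
          have huq : q ∉ seg (s u) := hu
          have hvq : q ∉ seg (s v) := hv
          rcases (by decide : ∀ a : Fin 4, a = 0 ∨ a = 1 ∨ a = 2 ∨ a = 3) i0 with rfl | rfl | rfl | rfl
          · have h2 : z ∈ seg (s x) := hf2 ▸ hzmem 2 (by decide)
            have h3 : z ∈ seg (s y) := hf3 ▸ hzmem 3 (by decide)
            have h1 : z ∈ seg (s v) := hf1 ▸ hzmem 1 (by decide)
            exact hvq ((huniq z h2 h3) ▸ h1)
          · have h2 : z ∈ seg (s x) := hf2 ▸ hzmem 2 (by decide)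
            have h3 : z ∈ seg (s y) := hf3 ▸ hzmem 3 (by decide)
            have h0 : z ∈ seg (s u) := hf0 ▸ hzmem 0 (by decide)
            exact huq ((huniq z h2 h3) ▸ h0)
          · have h0 : z ∈ seg (s u) := hf0 ▸ hzmem 0 (by decide)
            have h1 : z ∈ seg (s v) := hf1 ▸ hzmem 1 (by decide)
            have h3 : z ∈ seg (s y) := hf3 ▸ hzmem 3 (by decide)
            have hzp : z = p := seg_inter_subsingleton (hc u v huv) ⟨h0, h1⟩ ⟨hpu, hpv⟩
            exact hyB (hzp ▸ h3)
          · have h0 : z ∈ seg (s u) := hf0 ▸ hzmem 0 (by decide)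
            have h1 : z ∈ seg (s v) := hf1 ▸ hzmem 1 (by decide)
            have h2 : z ∈ seg (s x) := hf2 ▸ hzmem 2 (by decide)
            have hzp : z = p := seg_inter_subsingleton (hc u v huv) ⟨h0, h1⟩ ⟨hpu, hpv⟩
            exact hxB (hzp ▸ h2)
        have h1 : Bq.ncard ≤ 1 := (Set.ncard_le_one (Set.toFinite _)).mpr hbadq
        have h2 : Bq.ncard + Bqᶜ.ncard = m + 1 := by
          rw [Set.ncard_add_ncard_compl]; simp
        have h3 : {i : Fin (m+1) | q ∈ seg (s i)} = Bqᶜ := by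
          ext i; simp [hBq]
        rw [h3]; omega

end Stmt7Aux

/-- Let `n ≥ 1` and let `s₁, …, sₙ` be segments in contact position any two of which
intersect (a contact-segment representation of `Kₙ`). Then some point of the plane
belongs to at least `n − 1` of the segments. -/
theorem stmt7 (n : ℕ) (hn : 1 ≤ n) (s : Fin n → Pt × Pt)
    (hcontact : InContactPosition s)
    (hint : ∀ i j : Fin n, (seg (s i) ∩ seg (s j)).Nonempty) :
    ∃ p : Pt, n - 1 ≤ {i : Fin n | p ∈ seg (s i)}.ncard :=
  Stmt7Aux.main n s hcontact hint
end

section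
/- Let 𝒮 be a finite family of closed axis-parallel squares in ℝ² with pairwise distinct side lengths, and let ω be a positive integer such that every subfamily of 𝒮 consisting of pairwise intersecting squares has size at most ω. Then for every square S ∈ 𝒮, the number of squares T ∈ 𝒮 whose side length is strictly larger than that of S and which intersect S is at most 4ω. -/
/-- The closed axis-parallel square with lower-left corner `(a, b)` and side length
`ℓ`. -/
def square (a b ℓ : ℝ) : Set (ℝ × ℝ) := Set.Icc a (a + ℓ) ×ˢ Set.Icc b (b + ℓ)

lemma one_dim {a ℓ a' ℓ' x : ℝ} (h : ℓ < ℓ') (h1 : a' ≤ x) (h2 : x ≤ a' + ℓ')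
    (h3 : a ≤ x) (h4 : x ≤ a + ℓ) :
    (a' ≤ a ∧ a ≤ a' + ℓ') ∨ (a' ≤ a + ℓ ∧ a + ℓ ≤ a' + ℓ') := by
  rcases le_or_gt a' a with hc | hc
  · left; constructor <;> linarith
  · right; constructor <;> linarith

/-- Let `𝒮` be a finite family of closed axis-parallel squares with pairwise distinct
side lengths such that every subfamily of pairwise intersecting squares has size at
most `ω`. Then each square intersects at most `4ω` strictly larger squares of the
family. -/
theorem stmt10 {ι : Type*} [Finite ι] (a b ℓ : ι → ℝ)
    (hpos : ∀ i, 0 < ℓ i) (hdist : Function.Injective ℓ)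
    (ω : ℕ) (hω : 0 < ω)
    (hclique : ∀ J : Set ι,
      (J.Pairwise fun i j =>
        (square (a i) (b i) (ℓ i) ∩ square (a j) (b j) (ℓ j)).Nonempty) →
      J.ncard ≤ ω) :
    ∀ i : ι,
      {j : ι | ℓ i < ℓ j ∧
        (square (a i) (b i) (ℓ i) ∩ square (a j) (b j) (ℓ j)).Nonempty}.ncard
      ≤ 4 * ω := by
  intro i
  set C : ℝ → ℝ → Set ι := fun x y => {j | (x, y) ∈ square (a j) (b j) (ℓ j)} with hCdef
  have hC : ∀ x y, (C x y).ncard ≤ ω := by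
    intro x y
    apply hclique
    intro p hp q hq _
    exact ⟨(x, y), hp, hq⟩
  have hsub : {j : ι | ℓ i < ℓ j ∧
      (square (a i) (b i) (ℓ i) ∩ square (a j) (b j) (ℓ j)).Nonempty} ⊆
      C (a i) (b i) ∪ C (a i + ℓ i) (b i) ∪ C (a i) (b i + ℓ i)
        ∪ C (a i + ℓ i) (b i + ℓ i) := by
    rintro j ⟨hlt, ⟨⟨x, y⟩, hxi, hxj⟩⟩
    simp only [square, Set.mem_prod, Set.mem_Icc] at hxi hxj
    obtain ⟨⟨hx1, hx2⟩, hy1, hy2⟩ := hxi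
    obtain ⟨⟨hx3, hx4⟩, hy3, hy4⟩ := hxj
    have Hx := one_dim hlt hx3 hx4 hx1 hx2
    have Hy := one_dim hlt hy3 hy4 hy1 hy2
    simp only [hCdef, Set.mem_union, Set.mem_setOf_eq, square, Set.mem_prod, Set.mem_Icc]
    rcases Hx with ⟨p1, p2⟩ | ⟨p1, p2⟩ <;> rcases Hy with ⟨q1, q2⟩ | ⟨q1, q2⟩ <;> tauto
  calc {j : ι | ℓ i < ℓ j ∧
      (square (a i) (b i) (ℓ i) ∩ square (a j) (b j) (ℓ j)).Nonempty}.ncard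
      ≤ (C (a i) (b i) ∪ C (a i + ℓ i) (b i) ∪ C (a i) (b i + ℓ i)
          ∪ C (a i + ℓ i) (b i + ℓ i)).ncard :=
        Set.ncard_le_ncard hsub (Set.toFinite _)
    _ ≤ (C (a i) (b i) ∪ C (a i + ℓ i) (b i) ∪ C (a i) (b i + ℓ i)).ncard
          + (C (a i + ℓ i) (b i + ℓ i)).ncard := Set.ncard_union_le _ _
    _ ≤ ((C (a i) (b i) ∪ C (a i + ℓ i) (b i)).ncard + (C (a i) (b i + ℓ i)).ncard)
          + (C (a i + ℓ i) (b i + ℓ i)).ncard := by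
        gcongr; exact Set.ncard_union_le _ _
    _ ≤ (((C (a i) (b i)).ncard + (C (a i + ℓ i) (b i)).ncard)
          + (C (a i) (b i + ℓ i)).ncard)
          + (C (a i + ℓ i) (b i + ℓ i)).ncard := by
        gcongr; exact Set.ncard_union_le _ _
    _ ≤ ((ω + ω) + ω) + ω := by gcongr <;> exact hC _ _
    _ = 4 * ω := by ring
end

section
/- Let 𝒮 be a finite family of segments in ℝ² in contact position and let G be its intersection graph. Let ω ≥ 1 be an integer such that every clique of G (every set of pairwise adjacent vertices) has at most ω vertices. Then G does not contain the complete bipartite graph K_{12ω,12ω} as a subgraph. -/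
/-- The intersection graph of a family of segments: two distinct members are adjacent
iff they have a common point. -/
def interGraph {ι : Type*} (s : ι → Pt × Pt) : SimpleGraph ι :=
  SimpleGraph.fromRel (fun i j => (seg (s i) ∩ seg (s j)).Nonempty)

/-- Let `G` be the intersection graph of a finite family of segments in contact
position, and suppose every clique of `G` has at most `ω` vertices. Then `G` does not
contain `K_{12ω,12ω}` as a subgraph. -/
theorem stmt12 (n : ℕ) (s : Fin n → Pt × Pt)
    (hcontact : InContactPosition s)
    (ω : ℕ) (hω : 1 ≤ ω)
    (hclique : ∀ Q : Set (Fin n), (interGraph s).IsClique Q → Q.ncard ≤ ω) :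
    ¬ ∃ A B : Set (Fin n), Disjoint A B ∧ A.ncard = 12 * ω ∧ B.ncard = 12 * ω ∧
        ∀ a ∈ A, ∀ b ∈ B, (interGraph s).Adj a b := by
  classical
  rintro ⟨A, B, hdisj, hA, hB, hadj⟩
  -- Any finite set of segments through a common point is a clique, hence has ≤ ω members.
  have key : ∀ (p : Pt) (F : Finset (Fin n)), (∀ i ∈ F, p ∈ seg (s i)) → F.card ≤ ω := by
    intro p F hF
    have hcl : (interGraph s).IsClique (↑F : Set (Fin n)) := by
      intro i hi j hj hij
      simp only [interGraph, SimpleGraph.fromRel_adj]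
      exact ⟨hij, Or.inl ⟨p, hF i hi, hF j hj⟩⟩
    have := hclique (↑F) hcl
    simpa [Set.ncard_coe_finset] using this
  have hAfin : A.Finite := Set.toFinite A
  have hBfin : B.Finite := Set.toFinite B
  set FA := hAfin.toFinset with hFAdef
  set FB := hBfin.toFinset with hFBdef
  have hFA : FA.card = 12 * ω := by
    rw [← Set.ncard_eq_toFinset_card A hAfin, hA]
  have hFB : FB.card = 12 * ω := by
    rw [← Set.ncard_eq_toFinset_card B hBfin, hB]
  have memA : ∀ a, a ∈ FA ↔ a ∈ A := fun a => hAfin.mem_toFinset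
  have memB : ∀ b, b ∈ FB ↔ b ∈ B := fun b => hBfin.mem_toFinset
  -- Every pair (a, b) touches at an endpoint of a or an endpoint of b.
  have hcov : ∀ a ∈ FA, ∀ b ∈ FB,
      ((s a).1 ∈ seg (s b) ∨ (s a).2 ∈ seg (s b)) ∨
      ((s b).1 ∈ seg (s a) ∨ (s b).2 ∈ seg (s a)) := by
    intro a ha b hb
    have haA : a ∈ A := (memA a).1 ha
    have hbB : b ∈ B := (memB b).1 hb
    have hne : a ≠ b := fun h => (Set.disjoint_left.mp hdisj haA) (h ▸ hbB)
    have hadj' := hadj a haA b hbB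
    simp only [interGraph, SimpleGraph.fromRel_adj] at hadj'
    obtain ⟨-, h⟩ := hadj'
    obtain ⟨p, hpa, hpb⟩ : ∃ p, p ∈ seg (s a) ∧ p ∈ seg (s b) := by
      rcases h with ⟨p, h1, h2⟩ | ⟨p, h1, h2⟩
      · exact ⟨p, h1, h2⟩
      · exact ⟨p, h2, h1⟩
    rcases hcontact a b hne p hpa hpb with h | h | h | h
    · exact Or.inl (Or.inl (h ▸ hpb))
    · exact Or.inl (Or.inr (h ▸ hpb))
    · exact Or.inr (Or.inl (h ▸ hpa))
    · exact Or.inr (Or.inr (h ▸ hpa))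
  -- Bounding the number of segments of a finset touching the two endpoints of a segment.
  have twoends : ∀ (e : Pt × Pt) (F : Finset (Fin n)),
      (F.filter (fun i => e.1 ∈ seg (s i) ∨ e.2 ∈ seg (s i))).card ≤ 2 * ω := by
    intro e F
    have h1 : (F.filter (fun i => e.1 ∈ seg (s i))).card ≤ ω :=
      key e.1 _ (fun i hi => (Finset.mem_filter.mp hi).2)
    have h2 : (F.filter (fun i => e.2 ∈ seg (s i))).card ≤ ω :=
      key e.2 _ (fun i hi => (Finset.mem_filter.mp hi).2)
    calc (F.filter (fun i => e.1 ∈ seg (s i) ∨ e.2 ∈ seg (s i))).card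
        = ((F.filter (fun i => e.1 ∈ seg (s i))) ∪ (F.filter (fun i => e.2 ∈ seg (s i)))).card := by
          rw [← Finset.filter_or]
      _ ≤ _ + _ := Finset.card_union_le _ _
      _ ≤ 2 * ω := by omega
  -- For each a ∈ FA, at least 10ω segments of FB touch a at one of their own endpoints.
  have hsplit : ∀ a ∈ FA, FB.card ≤ 2 * ω +
      (FB.filter (fun b => (s b).1 ∈ seg (s a) ∨ (s b).2 ∈ seg (s a))).card := by
    intro a ha
    have hsub : FB ⊆
        (FB.filter (fun b => (s a).1 ∈ seg (s b) ∨ (s a).2 ∈ seg (s b))) ∪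
        (FB.filter (fun b => (s b).1 ∈ seg (s a) ∨ (s b).2 ∈ seg (s a))) := by
      intro b hb
      rcases hcov a ha b hb with h | h
      · exact Finset.mem_union_left _ (Finset.mem_filter.mpr ⟨hb, h⟩)
      · exact Finset.mem_union_right _ (Finset.mem_filter.mpr ⟨hb, h⟩)
    calc FB.card ≤ _ := Finset.card_le_card hsub
      _ ≤ (FB.filter (fun b => (s a).1 ∈ seg (s b) ∨ (s a).2 ∈ seg (s b))).card +
          (FB.filter (fun b => (s b).1 ∈ seg (s a) ∨ (s b).2 ∈ seg (s a))).card :=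
        Finset.card_union_le _ _
      _ ≤ _ := by
        have := twoends (s a) FB
        omega
  -- Double counting.
  set T := ∑ a ∈ FA, (FB.filter (fun b => (s b).1 ∈ seg (s a) ∨ (s b).2 ∈ seg (s a))).card with hTdef
  have hlow : 12 * ω * (12 * ω) ≤ 12 * ω * (2 * ω) + T := by
    have : ∑ a ∈ FA, FB.card ≤ ∑ a ∈ FA, (2 * ω +
        (FB.filter (fun b => (s b).1 ∈ seg (s a) ∨ (s b).2 ∈ seg (s a))).card) :=
      Finset.sum_le_sum hsplit
    rw [Finset.sum_add_distrib, Finset.sum_const, Finset.sum_const, smul_eq_mul, smul_eq_mul,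
      hFA, hFB] at this
    rw [hTdef]
    exact this
  have hswap : T = ∑ b ∈ FB,
      (FA.filter (fun a => (s b).1 ∈ seg (s a) ∨ (s b).2 ∈ seg (s a))).card := by
    rw [hTdef]
    simp only [Finset.card_filter]
    exact Finset.sum_comm
  have hup : T ≤ 12 * ω * (2 * ω) := by
    rw [hswap]
    calc ∑ b ∈ FB, (FA.filter (fun a => (s b).1 ∈ seg (s a) ∨ (s b).2 ∈ seg (s a))).card
        ≤ ∑ b ∈ FB, 2 * ω := Finset.sum_le_sum (fun b _ => twoends (s b) FA)
      _ = 12 * ω * (2 * ω) := by rw [Finset.sum_const, smul_eq_mul, hFB]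
  nlinarith [hlow, hup, hω]
end
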